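/- arXiv:2311.04548 — 11 statements merged into one kernel-verified Lean document; each statement's English description precedes it below -/
import Mathlib

section
/- Let ρ be a normalized proximate order function with limit ρ₀ > 0. Then for every ε > 0 there exists a constant C_ε ≥ 0 such that (r+s)^{ρ(r+s)} ≤ 2^{ρ₀+ε}·(r^{ρ(r)} + s^{ρ(s)}) + C_ε for all r, s > 0. -/
/-- For a normalized proximate order function ρ with limit ρ₀ > 0 and every ε > 0
there exists C_ε ≥ 0 with (r+s)^{ρ(r+s)} ≤ 2^{ρ₀+ε}(r^{ρ(r)} + s^{ρ(s)}) + C_ε. -/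
theorem stmt_1 (ρ : ℝ → ℝ) (ρ₀ : ℝ) (hρ₀ : 0 < ρ₀)
    (hdiff : Differentiable ℝ ρ)
    (hpos : ∀ r, 0 ≤ r → 0 ≤ ρ r)
    (hlim : Filter.Tendsto ρ Filter.atTop (nhds ρ₀))
    (hder : Filter.Tendsto (fun r => deriv ρ r * r * Real.log r) Filter.atTop (nhds 0))
    (hmono : StrictMonoOn (fun r => r ^ ρ r) (Set.Ioi (0:ℝ)))
    (hzero : Filter.Tendsto (fun r => r ^ ρ r) (nhdsWithin 0 (Set.Ioi 0)) (nhds 0)) :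
    ∀ ε > (0:ℝ), ∃ C ≥ (0:ℝ), ∀ r > (0:ℝ), ∀ s > (0:ℝ),
      (r + s) ^ ρ (r + s) ≤ (2:ℝ) ^ (ρ₀ + ε) * (r ^ ρ r + s ^ ρ s) + C := by
  intro ε hε
  have hlog2 : (0:ℝ) < Real.log 2 := Real.log_pos (by norm_num)
  -- choose R
  have h1 : ∀ᶠ t in Filter.atTop, |ρ t - ρ₀| < ε / 2 := by
    have := (Metric.tendsto_nhds.mp hlim) (ε/2) (by linarith)
    simpa [Real.dist_eq] using this
  have h2 : ∀ᶠ t in Filter.atTop, |deriv ρ t| * |t| * |Real.log t| < ε / 2 * Real.log 2 := by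
    have := (Metric.tendsto_nhds.mp hder) (ε/2 * Real.log 2) (by positivity)
    simpa [Real.dist_eq] using this
  obtain ⟨R₀, hR₀⟩ := Filter.eventually_atTop.mp (h1.and h2)
  set R : ℝ := max R₀ 2 with hR
  have hR2 : (2:ℝ) ≤ R := le_max_right _ _
  have hR1 : (1:ℝ) < R := lt_of_lt_of_le one_lt_two hR2
  have hRpos : (0:ℝ) < R := by linarith
  have hRbd : ∀ t, R ≤ t → |ρ t - ρ₀| < ε / 2 ∧ |deriv ρ t| * |t| * |Real.log t| < ε / 2 * Real.log 2 :=
    fun t ht => hR₀ t (le_trans (le_max_left _ _) ht)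
  -- key estimate for s ≥ R
  have key : ∀ s : ℝ, R ≤ s → (2*s) ^ ρ (2*s) ≤ (2:ℝ) ^ (ρ₀ + ε) * s ^ ρ s := by
    intro s hs
    have hs1 : (1:ℝ) < s := lt_of_lt_of_le hR1 hs
    have hs0 : (0:ℝ) < s := by linarith
    have hlns : 0 < Real.log s := Real.log_pos hs1
    -- MVT
    obtain ⟨c, hcmem, hc⟩ := exists_hasDerivAt_eq_slope ρ (deriv ρ) (by linarith : s < 2*s)
      (hdiff.continuous.continuousOn)
      (fun x _ => (hdiff x).hasDerivAt)
    have hcs : s < c := hcmem.1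
    have hc2s : c < 2*s := hcmem.2
    have hc1 : (1:ℝ) < c := lt_trans hs1 hcs
    have hc0 : (0:ℝ) < c := by linarith
    have hdiffρ : ρ (2*s) - ρ s = deriv ρ c * s := by
      rw [hc, div_mul_eq_mul_div, eq_div_iff (ne_of_gt (by linarith : (0:ℝ) < 2*s - s))]
      ring
    -- bound on (ρ(2s)-ρ(s)) * log s
    have hlnc : Real.log s ≤ Real.log c := Real.log_le_log hs0 hcs.le
    have habs_s : |s| ≤ |c| := by
      rw [abs_of_pos hs0, abs_of_pos hc0]; exact hcs.le
    have habs_ln : |Real.log s| ≤ |Real.log c| := by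
      rw [abs_of_pos hlns, abs_of_nonneg (le_trans hlns.le hlnc)]; exact hlnc
    have hbound : |(ρ (2*s) - ρ s) * Real.log s| ≤ ε / 2 * Real.log 2 := by
      rw [hdiffρ]
      calc |deriv ρ c * s * Real.log s| = |deriv ρ c| * |s| * |Real.log s| := by
            rw [abs_mul, abs_mul]
        _ ≤ |deriv ρ c| * |c| * |Real.log c| := by
            gcongr <;> exact abs_nonneg _
        _ ≤ ε / 2 * Real.log 2 := (hRbd c (le_trans hs hcs.le)).2.le
    have hρ2s : ρ (2*s) ≤ ρ₀ + ε / 2 := by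
      have := (hRbd (2*s) (by linarith)).1
      have := abs_lt.mp this
      linarith [this.1, this.2]
    -- log inequality
    have hlogineq : Real.log (2*s) * ρ (2*s) ≤ (ρ₀ + ε) * Real.log 2 + Real.log s * ρ s := by
      rw [Real.log_mul (by norm_num) (ne_of_gt hs0)]
      have habs := (abs_le.mp hbound).2
      have hρ2s0 : 0 ≤ ρ (2*s) := hpos _ (by linarith)
      have e1 : Real.log 2 * ρ (2*s) ≤ Real.log 2 * (ρ₀ + ε/2) :=
        mul_le_mul_of_nonneg_left hρ2s hlog2.le
      nlinarith [habs, e1]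
    have h2s0 : (0:ℝ) < 2*s := by linarith
    rw [Real.rpow_def_of_pos h2s0, Real.rpow_def_of_pos hs0,
      show (2:ℝ) ^ (ρ₀ + ε) = Real.exp (Real.log 2 * (ρ₀ + ε)) from
        Real.rpow_def_of_pos (by norm_num) _, ← Real.exp_add]
    exact Real.exp_le_exp.mpr (by linarith)
  -- define C
  refine ⟨(2*R) ^ ρ (2*R), Real.rpow_nonneg (by linarith) _, ?_⟩
  intro r hr s hs
  set m := max r s with hm
  have hm0 : 0 < m := lt_of_lt_of_le hr (le_max_left _ _)
  have hrs : r + s ≤ 2 * m := by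
    have := le_max_left r s
    have := le_max_right r s
    simp only [hm]; rcases max_cases r s with ⟨h, _⟩ | ⟨h, _⟩ <;> rw [h] <;> linarith
  have hrs0 : 0 < r + s := by linarith
  have hmonoM := hmono.monotoneOn
  have hpow2 : (0:ℝ) < (2:ℝ) ^ (ρ₀ + ε) := Real.rpow_pos_of_pos (by norm_num) _
  have hrpow : 0 ≤ r ^ ρ r := Real.rpow_nonneg hr.le _
  have hspow : 0 ≤ s ^ ρ s := Real.rpow_nonneg hs.le _
  rcases le_or_gt m R with hle | hgt
  · -- small case
    have h1 : (r + s) ^ ρ (r + s) ≤ (2*R) ^ ρ (2*R) :=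
      hmonoM (Set.mem_Ioi.mpr hrs0) (Set.mem_Ioi.mpr (by linarith)) (by linarith)
    nlinarith [mul_nonneg hpow2.le (add_nonneg hrpow hspow)]
  · -- large case
    have h1 : (r + s) ^ ρ (r + s) ≤ (2*m) ^ ρ (2*m) :=
      hmonoM (Set.mem_Ioi.mpr hrs0) (Set.mem_Ioi.mpr (by linarith)) hrs
    have h2 : (2*m) ^ ρ (2*m) ≤ (2:ℝ) ^ (ρ₀ + ε) * m ^ ρ m := key m hgt.le
    have h3 : m ^ ρ m ≤ r ^ ρ r + s ^ ρ s := by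
      rcases max_cases r s with ⟨h, _⟩ | ⟨h, _⟩ <;> simp only [hm, h] <;> linarith
    have hC : 0 ≤ (2*R) ^ ρ (2*R) := Real.rpow_nonneg (by linarith) _
    calc (r + s) ^ ρ (r + s) ≤ (2:ℝ) ^ (ρ₀ + ε) * m ^ ρ m := le_trans h1 h2
      _ ≤ (2:ℝ) ^ (ρ₀ + ε) * (r ^ ρ r + s ^ ρ s) := mul_le_mul_of_nonneg_left h3 hpow2.le
      _ ≤ _ := by linarith
end

section
/- Let ρ be a normalized proximate order function with limit ρ₀ > 0, let φ:(0,∞)→(0,∞) be the inverse of r ↦ r^{ρ(r)}, and define G₀ = 1, G_ℓ = φ(ℓ)^ℓ / (e·ρ₀)^{ℓ/ρ₀} for ℓ ≥ 1. Then G_ℓ · G_k ≤ G_{ℓ+k} for all ℓ, k ∈ ℕ₀. -/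
/-- Submultiplicativity of the numbers G_ℓ = φ(ℓ)^ℓ/(eρ₀)^{ℓ/ρ₀} attached to a
normalized proximate order function. -/
theorem stmt_3 (ρ : ℝ → ℝ) (ρ₀ : ℝ) (hρ₀ : 0 < ρ₀)
    (hdiff : Differentiable ℝ ρ)
    (hpos : ∀ r, 0 ≤ r → 0 ≤ ρ r)
    (hlim : Filter.Tendsto ρ Filter.atTop (nhds ρ₀))
    (hder : Filter.Tendsto (fun r => deriv ρ r * r * Real.log r) Filter.atTop (nhds 0))
    (hmono : StrictMonoOn (fun r => r ^ ρ r) (Set.Ioi (0:ℝ)))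
    (hzero : Filter.Tendsto (fun r => r ^ ρ r) (nhdsWithin 0 (Set.Ioi 0)) (nhds 0))
    (φ : ℝ → ℝ) (hφpos : ∀ t, 0 < t → 0 < φ t)
    (hφ : ∀ r, 0 < r → φ (r ^ ρ r) = r)
    (hφ' : ∀ t, 0 < t → (φ t) ^ ρ (φ t) = t)
    (G : ℕ → ℝ) (hG0 : G 0 = 1)
    (hG : ∀ ℓ : ℕ, 0 < ℓ → G ℓ = φ (ℓ : ℝ) ^ ℓ / (Real.exp 1 * ρ₀) ^ ((ℓ : ℝ) / ρ₀)) :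
    ∀ ℓ k : ℕ, G ℓ * G k ≤ G (ℓ + k) := by
  -- φ is monotone on (0,∞)
  have hφmono : ∀ s t : ℝ, 0 < s → s ≤ t → φ s ≤ φ t := by
    intro s t hs hst
    by_contra h
    push_neg at h
    have ht : 0 < t := lt_of_lt_of_le hs hst
    have := hmono (Set.mem_Ioi.mpr (hφpos t ht)) (Set.mem_Ioi.mpr (hφpos s hs)) h
    simp only [hφ' s hs, hφ' t ht] at this
    linarith
  intro ℓ k
  rcases Nat.eq_zero_or_pos ℓ with hℓ | hℓ
  · subst hℓ; simp [hG0]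
  rcases Nat.eq_zero_or_pos k with hk | hk
  · subst hk; simp [hG0]
  have hlk : 0 < ℓ + k := by omega
  rw [hG ℓ hℓ, hG k hk, hG (ℓ + k) hlk]
  have hbase : (0:ℝ) < Real.exp 1 * ρ₀ := mul_pos (Real.exp_pos 1) hρ₀
  have hden : ((ℓ + k : ℕ) : ℝ) / ρ₀ = (ℓ : ℝ) / ρ₀ + (k : ℝ) / ρ₀ := by
    push_cast; ring
  rw [hden, Real.rpow_add hbase, div_mul_div_comm]
  apply div_le_div_of_nonneg_right ?_ (by positivity)
  have h1 : φ (ℓ : ℝ) ≤ φ ((ℓ + k : ℕ) : ℝ) := by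
    apply hφmono _ _ (by exact_mod_cast hℓ)
    exact_mod_cast Nat.le_add_right ℓ k
  have h2 : φ (k : ℝ) ≤ φ ((ℓ + k : ℕ) : ℝ) := by
    apply hφmono _ _ (by exact_mod_cast hk)
    exact_mod_cast Nat.le_add_left k ℓ
  have hφℓ : 0 ≤ φ (ℓ : ℝ) := (hφpos _ (by exact_mod_cast hℓ)).le
  have hφk : 0 ≤ φ (k : ℝ) := (hφpos _ (by exact_mod_cast hk)).le
  calc φ (ℓ:ℝ) ^ ℓ * φ (k:ℝ) ^ k
      ≤ φ ((ℓ+k:ℕ):ℝ) ^ ℓ * φ ((ℓ+k:ℕ):ℝ) ^ k := by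
        apply mul_le_mul (pow_le_pow_left₀ hφℓ h1 ℓ) (pow_le_pow_left₀ hφk h2 k)
          (by positivity) (pow_nonneg (le_trans hφℓ h1) ℓ)
    _ = φ ((ℓ+k:ℕ):ℝ) ^ (ℓ + k) := by rw [← pow_add]
end

section
/- Let ρ be a normalized proximate order function with limit ρ₀ > 0 and let φ be the inverse of r ↦ r^{ρ(r)}. Then lim_{t→∞} t·φ'(t)/φ(t) = 1/ρ₀. -/
/-!
Writing g(r) = r^{ρ(r)}, one has r g'(r) / g(r) = ρ(r) + ρ'(r) r log r, which tends to ρ₀ by the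
two defining limits of a proximate order. Differentiating g(φ(t)) = t gives
t φ'(t) / φ(t) = 1 / (ρ(r) + ρ'(r) r log r) at r = φ(t), and φ(t) → ∞ because g is increasing.
-/

open Filter Real Set Topology

theorem tendsto_atTop_of_rightInverse_of_monotoneOn {g φ : ℝ → ℝ} (hg : MonotoneOn g (Ioi 0))
    (hφpos : ∀ t, 0 < t → 0 < φ t) (hgφ : ∀ t, 0 < t → g (φ t) = t) :
    Tendsto φ atTop atTop := by
  refine tendsto_atTop.2 fun M => ?_
  have hR : (0 : ℝ) < max M 1 := lt_max_of_lt_right one_pos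
  filter_upwards [eventually_gt_atTop (max (g (max M 1)) 0)] with t ht
  have ht0 : 0 < t := (le_max_right _ _).trans_lt ht
  by_contra! hφt
  have := hg (hφpos t ht0) hR (hφt.le.trans (le_max_left _ _))
  rw [hgφ t ht0] at this
  exact (this.trans (le_max_left _ _)).not_gt ht

theorem hasDerivAt_rpow_self {ρ : ℝ → ℝ} {ρ' x : ℝ} (hρ : HasDerivAt ρ ρ' x) (hx : 0 < x) :
    HasDerivAt (fun y => y ^ ρ y) (x ^ (ρ x - 1) * (ρ x + ρ' * x * log x)) x := by
  convert (hasDerivAt_id' x).rpow hρ hx using 1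
  have hpow : x ^ ρ x = x ^ (ρ x - 1) * x := by
    rw [← rpow_add_one hx.ne', sub_add_cancel]
  rw [hpow]
  ring

theorem mul_deriv_div_eq_of_rpow_self_eq {ρ φ : ℝ → ℝ} {ρ' φ' t : ℝ}
    (hρ : HasDerivAt ρ ρ' (φ t)) (hφ : HasDerivAt φ φ' t) (hφt : 0 < φ t)
    (hinv : ∀ᶠ s in 𝓝 t, φ s ^ ρ (φ s) = s) :
    t * φ' / φ t = 1 / (ρ (φ t) + ρ' * φ t * log (φ t)) := by
  set r := φ t
  have hchain : r ^ (ρ r - 1) * (ρ r + ρ' * r * log r) * φ' = 1 :=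
    ((hasDerivAt_rpow_self hρ hφt).comp t hφ).unique
      ((hasDerivAt_id t).congr_of_eventuallyEq hinv)
  have ht : t = r ^ (ρ r - 1) * r := by
    rw [← hinv.self_of_nhds, ← rpow_add_one hφt.ne', sub_add_cancel]
  have hquot : t * φ' / r = r ^ (ρ r - 1) * φ' := by
    rw [ht]
    field_simp
  rw [hquot]
  exact eq_one_div_of_mul_eq_one_left (by linear_combination hchain)

theorem stmt_4_general (ρ : ℝ → ℝ) (ρ₀ : ℝ) (hρ₀ : 0 < ρ₀)
    (hdiff : Differentiable ℝ ρ)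
    (hlim : Filter.Tendsto ρ Filter.atTop (nhds ρ₀))
    (hder : Filter.Tendsto (fun r => deriv ρ r * r * Real.log r) Filter.atTop (nhds 0))
    (hmono : StrictMonoOn (fun r => r ^ ρ r) (Set.Ioi (0:ℝ)))
    (φ : ℝ → ℝ) (hφpos : ∀ t, 0 < t → 0 < φ t)
    (hφ' : ∀ t, 0 < t → (φ t) ^ ρ (φ t) = t)
    (hφdiff : ∀ t, 0 < t → DifferentiableAt ℝ φ t) :
    Filter.Tendsto (fun t => t * deriv φ t / φ t) Filter.atTop (nhds (1 / ρ₀)) := by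
  have hφtop : Tendsto φ atTop atTop :=
    tendsto_atTop_of_rightInverse_of_monotoneOn hmono.monotoneOn hφpos hφ'
  have hE : Tendsto (fun t => ρ (φ t) + deriv ρ (φ t) * φ t * log (φ t)) atTop (𝓝 ρ₀) := by
    simpa using (hlim.comp hφtop).add (hder.comp hφtop)
  refine (tendsto_const_nhds.div hE hρ₀.ne').congr' ?_
  filter_upwards [eventually_gt_atTop 0] with t ht
  refine (mul_deriv_div_eq_of_rpow_self_eq (hdiff _).hasDerivAt (hφdiff t ht).hasDerivAt
    (hφpos t ht) ?_).symm
  filter_upwards [Ioi_mem_nhds ht] with s hs using hφ' s hs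

/-- For the inverse φ of r ↦ r^{ρ(r)} of a normalized proximate order function,
lim_{t→∞} t·φ'(t)/φ(t) = 1/ρ₀. -/
theorem stmt_4 (ρ : ℝ → ℝ) (ρ₀ : ℝ) (hρ₀ : 0 < ρ₀)
    (hdiff : Differentiable ℝ ρ)
    (hpos : ∀ r, 0 ≤ r → 0 ≤ ρ r)
    (hlim : Filter.Tendsto ρ Filter.atTop (nhds ρ₀))
    (hder : Filter.Tendsto (fun r => deriv ρ r * r * Real.log r) Filter.atTop (nhds 0))
    (hmono : StrictMonoOn (fun r => r ^ ρ r) (Set.Ioi (0:ℝ)))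
    (hzero : Filter.Tendsto (fun r => r ^ ρ r) (nhdsWithin 0 (Set.Ioi 0)) (nhds 0))
    (φ : ℝ → ℝ) (hφpos : ∀ t, 0 < t → 0 < φ t)
    (hφ : ∀ r, 0 < r → φ (r ^ ρ r) = r)
    (hφ' : ∀ t, 0 < t → (φ t) ^ ρ (φ t) = t)
    (hφdiff : ∀ t, 0 < t → DifferentiableAt ℝ φ t) :
    Filter.Tendsto (fun t => t * deriv φ t / φ t) Filter.atTop (nhds (1 / ρ₀)) :=
  stmt_4_general ρ ρ₀ hρ₀ hdiff hlim hder hmono φ hφpos hφ' hφdiff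
end

section
/- Let ρ be a normalized proximate order function with limit ρ₀ > 0 and let φ be the inverse of r ↦ r^{ρ(r)}. Then for every s > 0, lim_{t→∞} φ(s·t)/φ(t) = s^{1/ρ₀}. -/
open Filter Real in
private lemma stmt5_keyA (ρ : ℝ → ℝ) (ρ₀ : ℝ) (hdiff : Differentiable ℝ ρ)
    (hlim : Tendsto ρ atTop (nhds ρ₀))
    (hder : Tendsto (fun r => deriv ρ r * r * Real.log r) atTop (nhds 0))
    (c : ℝ) (hc : 1 < c) :
    Tendsto (fun r => Real.log (c*r) * ρ (c*r) - Real.log r * ρ r) atTop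
      (nhds (Real.log c * ρ₀)) := by
  have hc0 : (0:ℝ) < c := lt_trans one_pos hc
  have h2 : Tendsto (fun r => (ρ (c*r) - ρ r) * Real.log r) atTop (nhds 0) := by
    rw [Metric.tendsto_nhds]
    intro ε hε
    have hε' : 0 < ε / (2*c) := by positivity
    have H := hder.eventually (Metric.ball_mem_nhds (0:ℝ) hε')
    rw [eventually_atTop] at H
    obtain ⟨R, hR⟩ := H
    rw [eventually_atTop]
    refine ⟨max R 2, fun r hr => ?_⟩
    have hrR : R ≤ r := le_trans (le_max_left _ _) hr
    have hr2 : (2:ℝ) ≤ r := le_trans (le_max_right _ _) hr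
    have hr0 : (0:ℝ) < r := lt_of_lt_of_le two_pos hr2
    have hrcr : r < c * r := by nlinarith
    obtain ⟨ξ, hξ, hd⟩ := exists_deriv_eq_slope ρ hrcr
      (hdiff.continuous.continuousOn)
      (fun x _ => (hdiff x).differentiableWithinAt)
    have hξ1 : r < ξ := hξ.1
    have hξ2 : ξ < c * r := hξ.2
    have hlogr : 0 < Real.log r := Real.log_pos (by linarith)
    have hlogξ : 0 < Real.log ξ := Real.log_pos (by linarith)
    have hslope : ρ (c*r) - ρ r = deriv ρ ξ * (c*r - r) := by
      rw [hd, div_mul_cancel₀]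
      linarith
    have hRξ := hR ξ (by linarith)
    rw [Real.dist_eq, sub_zero] at hRξ
    have key : |deriv ρ ξ| * (ξ * Real.log ξ) < ε / (2*c) := by
      calc |deriv ρ ξ| * (ξ * Real.log ξ) = |deriv ρ ξ * ξ * Real.log ξ| := by
            rw [abs_mul, abs_mul, abs_of_pos (by linarith : (0:ℝ) < ξ),
              abs_of_pos hlogξ, mul_assoc]
        _ < ε / (2*c) := hRξ
    rw [Real.dist_eq, sub_zero, hslope]
    have hmon : r * Real.log r ≤ ξ * Real.log ξ :=
      mul_le_mul (le_of_lt hξ1) (Real.log_le_log hr0 (le_of_lt hξ1)) (le_of_lt hlogr)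
        (by linarith)
    have habs : |deriv ρ ξ * (c*r - r) * Real.log r|
        = |deriv ρ ξ| * ((c - 1) * (r * Real.log r)) := by
      rw [abs_mul, abs_mul, abs_of_pos hlogr, abs_of_pos (by nlinarith : (0:ℝ) < c*r - r)]
      ring
    rw [habs]
    have h1 : |deriv ρ ξ| * ((c - 1) * (r * Real.log r))
        ≤ (c-1) * (|deriv ρ ξ| * (ξ * Real.log ξ)) := by
      have := mul_le_mul_of_nonneg_left hmon (abs_nonneg (deriv ρ ξ))
      nlinarith [abs_nonneg (deriv ρ ξ)]
    have h2 : (c-1) * (|deriv ρ ξ| * (ξ * Real.log ξ)) < (c-1) * (ε / (2*c)) :=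
      mul_lt_mul_of_pos_left key (by linarith)
    have h3 : (c-1) * (ε / (2*c)) < ε := by
      have hεd : ε = 2*c*(ε/(2*c)) := by field_simp
      nlinarith [hε']
    linarith
  have h1 : Tendsto (fun r => Real.log c * ρ (c*r)) atTop (nhds (Real.log c * ρ₀)) := by
    exact (hlim.comp (Tendsto.const_mul_atTop hc0 tendsto_id)).const_mul _
  have hsum := h1.add h2
  rw [add_zero] at hsum
  refine hsum.congr' ?_
  filter_upwards [eventually_gt_atTop (0:ℝ)] with r hr
  have : Real.log (c*r) = Real.log c + Real.log r := Real.log_mul (ne_of_gt hc0) (ne_of_gt hr)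
  rw [this]
  ring

open Filter Real in
private lemma stmt5_keyB (ρ : ℝ → ℝ) (ρ₀ : ℝ) (hdiff : Differentiable ℝ ρ)
    (hlim : Tendsto ρ atTop (nhds ρ₀))
    (hder : Tendsto (fun r => deriv ρ r * r * Real.log r) atTop (nhds 0))
    (c : ℝ) (hc0 : 0 < c) :
    Tendsto (fun r => Real.log (c*r) * ρ (c*r) - Real.log r * ρ r) atTop
      (nhds (Real.log c * ρ₀)) := by
  rcases lt_trichotomy c 1 with h | h | h
  · have h1c : 1 < 1/c := by rw [lt_div_iff₀ hc0]; linarith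
    have H := ((stmt5_keyA ρ ρ₀ hdiff hlim hder (1/c) h1c).comp
      (Tendsto.const_mul_atTop hc0 tendsto_id)).neg
    have heq : ∀ᶠ r in atTop, (-((fun r => Real.log ((1/c)*r) * ρ ((1/c)*r)
        - Real.log r * ρ r) ∘ (fun x => c * id x))) r
        = Real.log (c*r) * ρ (c*r) - Real.log r * ρ r := by
      filter_upwards [eventually_gt_atTop (0:ℝ)] with r hr
      have h2 : c⁻¹ * (c * r) = r := by field_simp
      simp only [Pi.neg_apply, Function.comp_apply, id_eq, one_div, h2]
      ring
    have := H.congr' heq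
    convert this using 2
    rw [Real.log_div one_ne_zero (ne_of_gt hc0), Real.log_one]
    ring
  · subst h
    simp only [one_mul, sub_self, Real.log_one, zero_mul]
    exact tendsto_const_nhds
  · exact stmt5_keyA ρ ρ₀ hdiff hlim hder c h

/-- For the inverse φ of r ↦ r^{ρ(r)} of a normalized proximate order function,
lim_{t→∞} φ(st)/φ(t) = s^{1/ρ₀} for every s > 0. -/
theorem stmt_5 (ρ : ℝ → ℝ) (ρ₀ : ℝ) (hρ₀ : 0 < ρ₀)
    (hdiff : Differentiable ℝ ρ)
    (hpos : ∀ r, 0 ≤ r → 0 ≤ ρ r)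
    (hlim : Filter.Tendsto ρ Filter.atTop (nhds ρ₀))
    (hder : Filter.Tendsto (fun r => deriv ρ r * r * Real.log r) Filter.atTop (nhds 0))
    (hmono : StrictMonoOn (fun r => r ^ ρ r) (Set.Ioi (0:ℝ)))
    (hzero : Filter.Tendsto (fun r => r ^ ρ r) (nhdsWithin 0 (Set.Ioi 0)) (nhds 0))
    (φ : ℝ → ℝ) (hφpos : ∀ t, 0 < t → 0 < φ t)
    (hφ : ∀ r, 0 < r → φ (r ^ ρ r) = r)
    (hφ' : ∀ t, 0 < t → (φ t) ^ ρ (φ t) = t) :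
    ∀ s > (0:ℝ),
      Filter.Tendsto (fun t => φ (s * t) / φ t) Filter.atTop (nhds (s ^ (1 / ρ₀))) := by
  have hVlt : ∀ x y : ℝ, 0 < x → 0 < y → x ^ ρ x < y ^ ρ y → x < y := by
    intro x y hx hy hV
    by_contra h
    push_neg at h
    exact absurd (hmono.monotoneOn (Set.mem_Ioi.2 hy) (Set.mem_Ioi.2 hx) h) (not_le.2 hV)
  have hφtop : Filter.Tendsto φ Filter.atTop Filter.atTop := by
    rw [Filter.tendsto_atTop]
    intro M
    have hM1 : (0:ℝ) < max M 1 := lt_of_lt_of_le one_pos (le_max_right _ _)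
    filter_upwards [Filter.eventually_gt_atTop (max ((max M 1) ^ ρ (max M 1)) 0)] with t ht
    have ht0 : 0 < t := lt_of_le_of_lt (le_max_right _ _) ht
    have h1 : (max M 1) ^ ρ (max M 1) < t := lt_of_le_of_lt (le_max_left _ _) ht
    rw [← hφ' t ht0] at h1
    exact le_trans (le_max_left M 1) (le_of_lt (hVlt _ _ hM1 (hφpos t ht0) h1))
  intro s hs
  rw [tendsto_order]
  constructor
  · intro b hb
    rcases le_or_gt b 0 with hb0 | hb0
    · filter_upwards [Filter.eventually_gt_atTop (0:ℝ)] with t ht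
      exact lt_of_le_of_lt hb0 (div_pos (hφpos _ (mul_pos hs ht)) (hφpos _ ht))
    · have hlt : Real.log b * ρ₀ < Real.log s := by
        have h1 : Real.log b < Real.log (s ^ (1/ρ₀)) := Real.log_lt_log hb0 hb
        rw [Real.log_rpow hs] at h1
        calc Real.log b * ρ₀ < (1/ρ₀ * Real.log s) * ρ₀ := by nlinarith
          _ = Real.log s := by field_simp
      have hev := (stmt5_keyB ρ ρ₀ hdiff hlim hder b hb0).eventually_lt_const hlt
      filter_upwards [hφtop.eventually hev, Filter.eventually_gt_atTop (0:ℝ),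
        hφtop.eventually (Filter.eventually_gt_atTop (0:ℝ))] with t hgt ht0 hφt0
      have hst : 0 < s * t := mul_pos hs ht0
      have hVb : (b * φ t) ^ ρ (b * φ t) < s * t := by
        have e1 : (b * φ t) ^ ρ (b * φ t) = Real.exp (Real.log (b * φ t) * ρ (b * φ t)) :=
          Real.rpow_def_of_pos (mul_pos hb0 hφt0) _
        have e2 : s * t = Real.exp (Real.log s + Real.log (φ t) * ρ (φ t)) := by
          rw [Real.exp_add, Real.exp_log hs, ← Real.rpow_def_of_pos hφt0, hφ' t ht0]
        rw [e1, e2]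
        exact Real.exp_lt_exp.2 (by linarith)
      rw [← hφ' (s*t) hst] at hVb
      have := hVlt _ _ (mul_pos hb0 hφt0) (hφpos _ hst) hVb
      rw [lt_div_iff₀ hφt0]
      linarith
  · intro b hb
    have hb0 : 0 < b := lt_trans (Real.rpow_pos_of_pos hs _) hb
    have hlt : Real.log s < Real.log b * ρ₀ := by
      have h1 : Real.log (s ^ (1/ρ₀)) < Real.log b :=
        Real.log_lt_log (Real.rpow_pos_of_pos hs _) hb
      rw [Real.log_rpow hs] at h1
      calc Real.log s = (1/ρ₀ * Real.log s) * ρ₀ := by field_simp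
        _ < Real.log b * ρ₀ := by nlinarith
    have hev := (stmt5_keyB ρ ρ₀ hdiff hlim hder b hb0).eventually_const_lt hlt
    filter_upwards [hφtop.eventually hev, Filter.eventually_gt_atTop (0:ℝ),
      hφtop.eventually (Filter.eventually_gt_atTop (0:ℝ))] with t hgt ht0 hφt0
    have hst : 0 < s * t := mul_pos hs ht0
    have hVb : s * t < (b * φ t) ^ ρ (b * φ t) := by
      have e1 : (b * φ t) ^ ρ (b * φ t) = Real.exp (Real.log (b * φ t) * ρ (b * φ t)) :=
        Real.rpow_def_of_pos (mul_pos hb0 hφt0) _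
      have e2 : s * t = Real.exp (Real.log s + Real.log (φ t) * ρ (φ t)) := by
        rw [Real.exp_add, Real.exp_log hs, ← Real.rpow_def_of_pos hφt0, hφ' t ht0]
      rw [e1, e2]
      exact Real.exp_lt_exp.2 (by linarith)
    rw [← hφ' (s*t) hst] at hVb
    have := hVlt _ _ (hφpos _ hst) (mul_pos hb0 hφt0) hVb
    rw [div_lt_iff₀ hφt0]
    linarith
end

section
/- Let ρ be a normalized proximate order function with limit ρ₀ > 0. Then for every s > 0, lim_{r→∞} (s·r)^{ρ(s·r)} / r^{ρ(r)} = s^{ρ₀}. -/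
/-- Arithmetic tail of the MVT estimate. -/
lemma stmt_6_tail (ε m s r c d : ℝ)
    (hm : 0 < m) (hm1 : m ≤ 1) (hε : 0 < ε)
    (hr1 : 2 ≤ r)
    (hmr1 : 1 < m * r)
    (hlog : Real.log r / 2 ≤ Real.log (m * r))
    (hc : m * r ≤ c)
    (hdb : |d * c * Real.log c| < ε * m / (4 * (|s - 1| + 1))) :
    |d * ((s - 1) * r) * Real.log r| < ε := by
  set δ := ε * m / (4 * (|s - 1| + 1)) with hδdef
  have habs : (0:ℝ) < |s - 1| + 1 := by positivity
  have hδ : 0 < δ := by positivity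
  have hr0 : (0:ℝ) < r := by linarith
  have hlogr : 0 < Real.log r := Real.log_pos (by linarith)
  have hc1 : 1 < c := lt_of_lt_of_le hmr1 hc
  have hc0 : 0 < c := by linarith
  have hlogc : 0 < Real.log c := Real.log_pos hc1
  have hloglec : Real.log r / 2 ≤ Real.log c :=
    le_trans hlog (Real.log_le_log (by positivity) hc)
  have key1 : m * r * (Real.log r / 2) ≤ c * Real.log c :=
    mul_le_mul hc hloglec (by positivity) hc0.le
  have habs2 : |d * c * Real.log c| = |d| * (c * Real.log c) := by
    rw [abs_mul, abs_mul, abs_of_pos hc0, abs_of_pos hlogc, mul_assoc]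
  rw [habs2] at hdb
  have h2 : |d| * (m * r * (Real.log r / 2)) ≤ |d| * (c * Real.log c) :=
    mul_le_mul_of_nonneg_left key1 (abs_nonneg d)
  have h3 : |d| * (m * r * (Real.log r / 2)) < δ := lt_of_le_of_lt h2 hdb
  have h4 : |d| * (r * Real.log r) < 2 * δ / m := by
    rw [lt_div_iff₀ hm]
    nlinarith [h3]
  have hgoal : |d * ((s - 1) * r) * Real.log r| =
      |s - 1| * (|d| * (r * Real.log r)) := by
    rw [abs_mul, abs_mul, abs_mul, abs_of_pos hr0, abs_of_pos hlogr]
    ring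
  rw [hgoal]
  have h5 : |s - 1| * (|d| * (r * Real.log r)) ≤ |s - 1| * (2 * δ / m) :=
    mul_le_mul_of_nonneg_left h4.le (abs_nonneg _)
  have h6 : |s - 1| * (2 * δ / m) < ε := by
    rw [hδdef]
    have he : 2 * (ε * m / (4 * (|s - 1| + 1))) / m = ε / (2 * (|s - 1| + 1)) := by
      field_simp; ring
    rw [he, mul_div_assoc', div_lt_iff₀ (by positivity : (0:ℝ) < 2 * (|s - 1| + 1))]
    nlinarith [abs_nonneg (s - 1)]
  exact lt_of_le_of_lt h5 h6

/-- For a normalized proximate order function ρ, lim_{r→∞} (sr)^{ρ(sr)}/r^{ρ(r)} = s^{ρ₀}. -/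
theorem stmt_6 (ρ : ℝ → ℝ) (ρ₀ : ℝ) (hρ₀ : 0 < ρ₀)
    (hdiff : Differentiable ℝ ρ)
    (hpos : ∀ r, 0 ≤ r → 0 ≤ ρ r)
    (hlim : Filter.Tendsto ρ Filter.atTop (nhds ρ₀))
    (hder : Filter.Tendsto (fun r => deriv ρ r * r * Real.log r) Filter.atTop (nhds 0))
    (hmono : StrictMonoOn (fun r => r ^ ρ r) (Set.Ioi (0:ℝ)))
    (hzero : Filter.Tendsto (fun r => r ^ ρ r) (nhdsWithin 0 (Set.Ioi 0)) (nhds 0)) :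
    ∀ s > (0:ℝ),
      Filter.Tendsto (fun r => (s * r) ^ ρ (s * r) / r ^ ρ r) Filter.atTop
        (nhds (s ^ ρ₀)) := by
  intro s hs
  set m : ℝ := min 1 s with hmdef
  have hm : 0 < m := lt_min one_pos hs
  have hm1 : m ≤ 1 := min_le_left _ _
  have hmul : Filter.Tendsto (fun r : ℝ => m * r) Filter.atTop Filter.atTop :=
    Filter.Tendsto.const_mul_atTop hm Filter.tendsto_id
  have hsr : Filter.Tendsto (fun r : ℝ => s * r) Filter.atTop Filter.atTop :=
    Filter.Tendsto.const_mul_atTop hs Filter.tendsto_id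
  -- second term tends to 0
  have h2 : Filter.Tendsto (fun r => (ρ (s * r) - ρ r) * Real.log r)
      Filter.atTop (nhds 0) := by
    rw [NormedAddCommGroup.tendsto_nhds_zero]
    intro ε hε
    set δ := ε * m / (4 * (|s - 1| + 1)) with hδdef
    have hδ : 0 < δ := by positivity
    have hT := Metric.tendsto_nhds.1 hder δ hδ
    rw [Filter.eventually_atTop] at hT
    obtain ⟨T, hT⟩ := hT
    have e1 : ∀ᶠ r in Filter.atTop, (2:ℝ) ≤ r := Filter.eventually_ge_atTop 2
    have e2 : ∀ᶠ r in Filter.atTop, T ≤ m * r := hmul.eventually_ge_atTop T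
    have e3 : ∀ᶠ r in Filter.atTop, 1 < m * r := hmul.eventually_gt_atTop 1
    have e4 : ∀ᶠ r in Filter.atTop, -2 * Real.log m ≤ Real.log r :=
      Real.tendsto_log_atTop.eventually_ge_atTop _
    filter_upwards [e1, e2, e3, e4] with r hr1 hr2 hr3 hr4
    have hr0 : (0:ℝ) < r := by linarith
    have hlogm : Real.log r / 2 ≤ Real.log (m * r) := by
      rw [Real.log_mul hm.ne' hr0.ne']
      linarith
    rcases eq_or_ne s 1 with h1 | h1
    · simp [h1, Real.norm_eq_abs, hε]
    -- MVT producing c with m*r ≤ c and the slope identity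
    have hmvt : ∃ c, m * r ≤ c ∧ ρ (s * r) - ρ r = deriv ρ c * ((s - 1) * r) := by
      rcases h1.lt_or_gt with hs1 | hs1
      · -- s < 1, interval [s*r, r]
        have hab : s * r < r := mul_lt_of_lt_one_left hr0 hs1
        obtain ⟨c, hc, hsl⟩ := exists_hasDerivAt_eq_slope ρ (deriv ρ) hab
          hdiff.continuous.continuousOn (fun x _ => (hdiff x).hasDerivAt)
        refine ⟨c, ?_, ?_⟩
        · have : m = s := min_eq_right hs1.le
          rw [this]; exact hc.1.le
        · have hne : r - s * r ≠ 0 := by nlinarith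
          rw [eq_div_iff hne] at hsl
          linear_combination hsl
      · -- 1 < s, interval [r, s*r]
        have hab : r < s * r := lt_mul_of_one_lt_left hr0 hs1
        obtain ⟨c, hc, hsl⟩ := exists_hasDerivAt_eq_slope ρ (deriv ρ) hab
          hdiff.continuous.continuousOn (fun x _ => (hdiff x).hasDerivAt)
        refine ⟨c, ?_, ?_⟩
        · have : m * r ≤ r := by nlinarith
          linarith [hc.1]
        · have hne : s * r - r ≠ 0 := by nlinarith
          rw [eq_div_iff hne] at hsl
          linear_combination -hsl
    obtain ⟨c, hc, hid⟩ := hmvt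
    have hcT : T ≤ c := le_trans hr2 hc
    have hdb : |deriv ρ c * c * Real.log c| < δ := by
      have := hT c hcT
      rwa [Real.dist_eq, sub_zero] at this
    rw [Real.norm_eq_abs, hid]
    exact stmt_6_tail ε m s r c (deriv ρ c) hm hm1 hε hr1 hr3 hlogm hc hdb
  -- first term tends to ρ₀ * log s
  have h1 : Filter.Tendsto (fun r => ρ (s * r) * Real.log s) Filter.atTop
      (nhds (ρ₀ * Real.log s)) := (hlim.comp hsr).mul_const _
  have key : Filter.Tendsto (fun r => ρ (s * r) * Real.log (s * r) - ρ r * Real.log r)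
      Filter.atTop (nhds (ρ₀ * Real.log s)) := by
    have hsum := h1.add h2
    rw [add_zero] at hsum
    refine hsum.congr' ?_
    filter_upwards [Filter.eventually_gt_atTop 0] with r hr0
    rw [Real.log_mul hs.ne' hr0.ne']
    ring
  have hexp : Filter.Tendsto
      (fun r => Real.exp (ρ (s * r) * Real.log (s * r) - ρ r * Real.log r))
      Filter.atTop (nhds (Real.exp (ρ₀ * Real.log s))) :=
    (Real.continuous_exp.tendsto _).comp key
  have hfin : Real.exp (ρ₀ * Real.log s) = s ^ ρ₀ := by
    rw [Real.rpow_def_of_pos hs, mul_comm]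
  rw [← hfin]
  refine hexp.congr' ?_
  filter_upwards [Filter.eventually_gt_atTop 0] with r hr0
  have hsr0 : 0 < s * r := by positivity
  rw [Real.rpow_def_of_pos hsr0, Real.rpow_def_of_pos hr0, ← Real.exp_sub]
  ring_nf
end

section
/- Let ρ be a normalized proximate order function with limit ρ₀ > 0 and φ the inverse of r ↦ r^{ρ(r)}. Then for all 0 < σ' < σ there exists t₀ > 0 such that φ(t)/φ(t') ≤ e^{σ·t/t'} / (e·σ'·ρ₀)^{1/ρ₀} for all t, t' ≥ t₀. -/
/-!
Put `L(r) = log (r ^ ρ(r)) = ρ(r) log r`. Its logarithmic derivative `r L'(r) = ρ(r) + ρ'(r) r log r`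
tends to `ρ₀`, so by Cauchy's mean value theorem (for `L` against `log`) each ratio of two large
values satisfies `b / a = (b ^ ρ(b) / a ^ ρ(a)) ^ (1 / κ)` with `κ` as close to `ρ₀` as we like.
Applied to `a = φ t'`, `b = φ t` this gives `φ t / φ t' = (t / t') ^ (1 / κ)`, and the elementary
bound `u ^ (1 / κ) ≤ exp (σ u) / (e σ κ) ^ (1 / κ)` (the maximum of `u ^ (1 / κ) e ^ (-σ u)`,
attained at `u = 1 / (σ κ)`) finishes the proof, since `(e σ κ) ^ (1 / κ) > (e σ' ρ₀) ^ (1 / ρ₀)`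
for `κ` near `ρ₀`.
-/

open Real Set Filter Topology

theorem rpow_one_div_le_exp_div {σ κ u : ℝ} (hσ : 0 < σ) (hκ : 0 < κ) (hu : 0 < u) :
    u ^ (1 / κ) ≤ exp (σ * u) / (exp 1 * σ * κ) ^ (1 / κ) := by
  have hbase : exp 1 * (σ * κ * u) ≤ exp (σ * κ * u) := by
    have := add_one_le_exp (σ * κ * u - 1)
    rw [exp_sub, sub_add_cancel] at this
    rwa [← le_div_iff₀' (exp_pos 1)]
  rw [le_div_iff₀ (by positivity), ← mul_rpow hu.le (by positivity)]
  calc (u * (exp 1 * σ * κ)) ^ (1 / κ) = (exp 1 * (σ * κ * u)) ^ (1 / κ) := by ring_nf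
    _ ≤ exp (σ * κ * u) ^ (1 / κ) := by gcongr
    _ = exp (σ * u) := by rw [← exp_mul]; field_simp

theorem eventually_rpow_one_div_lt {σ' σ ρ₀ : ℝ} (hσ' : 0 < σ') (hσ'σ : σ' < σ) (hρ₀ : 0 < ρ₀) :
    ∀ᶠ κ in 𝓝 ρ₀, (exp 1 * σ' * ρ₀) ^ (1 / ρ₀) < (exp 1 * σ * κ) ^ (1 / κ) := by
  have hσ : 0 < σ := hσ'.trans hσ'σ
  have hcont : ContinuousAt (fun κ => (exp 1 * σ * κ) ^ (1 / κ)) ρ₀ :=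
    ContinuousAt.rpow (by fun_prop) (continuousAt_const.div continuousAt_id hρ₀.ne')
      (Or.inl (by positivity))
  refine hcont.eventually (eventually_gt_nhds ?_)
  exact rpow_lt_rpow (by positivity) (by gcongr) (by positivity)

section MulLog

variable {ρ : ℝ → ℝ}

theorem hasDerivAt_mul_log {r : ℝ} (hρ : DifferentiableAt ℝ ρ r) (hr : r ≠ 0) :
    HasDerivAt (fun x => ρ x * log x) ((ρ r + deriv ρ r * r * log r) / r) r := by
  refine (hρ.hasDerivAt.mul (hasDerivAt_log hr)).congr_deriv ?_
  field_simp
  ring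

theorem exists_mem_Icc_mul_log_sub_eq (hρ : Differentiable ℝ ρ) {R m M : ℝ} (hR : 0 < R)
    (hM : ∀ r, R ≤ r → ρ r + deriv ρ r * r * log r ∈ Icc m M) {a b : ℝ} (ha : R ≤ a)
    (hb : R ≤ b) : ∃ κ ∈ Icc m M, ρ b * log b - ρ a * log a = κ * (log b - log a) := by
  wlog hab : a ≤ b generalizing a b
  · obtain ⟨κ, hκ, h⟩ := this hb ha (le_of_not_ge hab)
    exact ⟨κ, hκ, by linarith⟩
  rcases hab.eq_or_lt with rfl | hab
  · exact ⟨_, hM a ha, by ring⟩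
  have hpos : ∀ x ∈ Icc a b, 0 < x := fun x hx => hR.trans_le (ha.trans hx.1)
  obtain ⟨c, hc, hslope⟩ := exists_ratio_hasDerivAt_eq_ratio_slope
    (fun x => ρ x * log x) (fun r => (ρ r + deriv ρ r * r * log r) / r) hab
    (fun x hx => (hasDerivAt_mul_log (hρ x) (hpos x hx).ne').continuousAt.continuousWithinAt)
    (fun x hx => hasDerivAt_mul_log (hρ x) (hpos x (Ioo_subset_Icc_self hx)).ne')
    log (fun x => x⁻¹) (continuousOn_log.mono fun x hx => (hpos x hx).ne')
    (fun x hx => hasDerivAt_log (hpos x (Ioo_subset_Icc_self hx)).ne')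
  have hc0 : c ≠ 0 := (hpos c (Ioo_subset_Icc_self hc)).ne'
  refine ⟨_, hM c (ha.trans hc.1.le), ?_⟩
  field_simp at hslope
  linarith

theorem exists_mem_Icc_div_eq_rpow (hρ : Differentiable ℝ ρ) {R m M : ℝ} (hR : 0 < R)
    (hm : 0 < m) (hM : ∀ r, R ≤ r → ρ r + deriv ρ r * r * log r ∈ Icc m M) {a b : ℝ}
    (ha : R ≤ a) (hb : R ≤ b) : ∃ κ ∈ Icc m M, b / a = (b ^ ρ b / a ^ ρ a) ^ (1 / κ) := by
  obtain ⟨κ, hκ, h⟩ := exists_mem_Icc_mul_log_sub_eq hρ hR hM ha hb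
  have ha0 : 0 < a := hR.trans_le ha
  have hb0 : 0 < b := hR.trans_le hb
  have hκ0 : κ ≠ 0 := (hm.trans_le hκ.1).ne'
  refine ⟨κ, hκ, ?_⟩
  rw [rpow_def_of_pos (by positivity), log_div (by positivity) (by positivity),
    log_rpow hb0, log_rpow ha0, h, ← exp_log (div_pos hb0 ha0), log_div hb0.ne' ha0.ne']
  field_simp

end MulLog

theorem stmt_7_general (ρ : ℝ → ℝ) (ρ₀ : ℝ) (hρ₀ : 0 < ρ₀)
    (hdiff : Differentiable ℝ ρ)
    (hlim : Filter.Tendsto ρ Filter.atTop (nhds ρ₀))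
    (hder : Filter.Tendsto (fun r => deriv ρ r * r * Real.log r) Filter.atTop (nhds 0))
    (hmono : StrictMonoOn (fun r => r ^ ρ r) (Set.Ioi (0:ℝ)))
    (φ : ℝ → ℝ) (hφpos : ∀ t, 0 < t → 0 < φ t)
    (hφ' : ∀ t, 0 < t → (φ t) ^ ρ (φ t) = t) :
    ∀ σ' σ : ℝ, 0 < σ' → σ' < σ → ∃ t₀ > (0:ℝ), ∀ t t' : ℝ, t₀ ≤ t → t₀ ≤ t' →
      φ t / φ t' ≤ Real.exp (σ * t / t') / (Real.exp 1 * σ' * ρ₀) ^ (1 / ρ₀) := by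
  intro σ' σ hσ' hσ'σ
  obtain ⟨m, M, hρ₀mM, hmM, hmM_sub⟩ := exists_Icc_mem_subset_of_mem_nhds
    ((eventually_rpow_one_div_lt hσ' hσ'σ hρ₀).and (eventually_gt_nhds hρ₀))
  have hlogder : Tendsto (fun r => ρ r + deriv ρ r * r * log r) atTop (𝓝 ρ₀) := by
    simpa using hlim.add hder
  obtain ⟨R, hR⟩ := eventually_atTop.1 (hlogder hmM)
  set R₁ := max R 1
  have hR₁ : 0 < R₁ := one_pos.trans_le (le_max_right _ _)
  have hφ_ge : ∀ t, R₁ ^ ρ R₁ ≤ t → R₁ ≤ φ t := fun t ht => by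
    have ht0 : 0 < t := (rpow_pos_of_pos hR₁ _).trans_le ht
    exact (hmono.le_iff_le hR₁ (hφpos t ht0)).1 (by simpa only [hφ' t ht0] using ht)
  refine ⟨R₁ ^ ρ R₁, rpow_pos_of_pos hR₁ _, fun t t' ht ht' => ?_⟩
  have hm : 0 < m := (hmM_sub ⟨le_rfl, hρ₀mM.1.trans hρ₀mM.2⟩).2
  obtain ⟨κ, hκ, hratio⟩ := exists_mem_Icc_div_eq_rpow hdiff hR₁ hm
    (fun r hr => hR r ((le_max_left _ _).trans hr)) (hφ_ge t' ht') (hφ_ge t ht)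
  have ht0 : 0 < t := (rpow_pos_of_pos hR₁ _).trans_le ht
  have ht'0 : 0 < t' := (rpow_pos_of_pos hR₁ _).trans_le ht'
  obtain ⟨hκ_lt, hκ0⟩ := hmM_sub hκ
  rw [hφ' t ht0, hφ' t' ht'0] at hratio
  calc φ t / φ t' = (t / t') ^ (1 / κ) := hratio
    _ ≤ exp (σ * (t / t')) / (exp 1 * σ * κ) ^ (1 / κ) :=
      rpow_one_div_le_exp_div (hσ'.trans hσ'σ) hκ0 (div_pos ht0 ht'0)
    _ ≤ exp (σ * t / t') / (exp 1 * σ' * ρ₀) ^ (1 / ρ₀) := by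
      rw [mul_div_assoc]
      exact div_le_div_of_nonneg_left (exp_pos _).le (by positivity) hκ_lt.le

/-- Lemma 2.11 iv): for 0 < σ' < σ there is t₀ > 0 with
φ(t)/φ(t') ≤ e^{σ t/t'}/(eσ'ρ₀)^{1/ρ₀} for all t, t' ≥ t₀. -/
theorem stmt_7 (ρ : ℝ → ℝ) (ρ₀ : ℝ) (hρ₀ : 0 < ρ₀)
    (hdiff : Differentiable ℝ ρ)
    (hpos : ∀ r, 0 ≤ r → 0 ≤ ρ r)
    (hlim : Filter.Tendsto ρ Filter.atTop (nhds ρ₀))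
    (hder : Filter.Tendsto (fun r => deriv ρ r * r * Real.log r) Filter.atTop (nhds 0))
    (hmono : StrictMonoOn (fun r => r ^ ρ r) (Set.Ioi (0:ℝ)))
    (hzero : Filter.Tendsto (fun r => r ^ ρ r) (nhdsWithin 0 (Set.Ioi 0)) (nhds 0))
    (φ : ℝ → ℝ) (hφpos : ∀ t, 0 < t → 0 < φ t)
    (hφ : ∀ r, 0 < r → φ (r ^ ρ r) = r)
    (hφ' : ∀ t, 0 < t → (φ t) ^ ρ (φ t) = t) :
    ∀ σ' σ : ℝ, 0 < σ' → σ' < σ → ∃ t₀ > (0:ℝ), ∀ t t' : ℝ, t₀ ≤ t → t₀ ≤ t' →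
      φ t / φ t' ≤ Real.exp (σ * t / t') / (Real.exp 1 * σ' * ρ₀) ^ (1 / ρ₀) :=
  stmt_7_general ρ ρ₀ hρ₀ hdiff hlim hder hmono φ hφpos hφ'
end

section
/- Let ρ be a normalized proximate order function with limit ρ₀ > 0, φ the inverse of r ↦ r^{ρ(r)}, and G_ℓ = φ(ℓ)^ℓ/(e·ρ₀)^{ℓ/ρ₀} (with G₀ = 1). Then for all 0 < σ' < σ there exists a constant C(σ,σ') > 0 such that sup_{r ≥ 0} r^ℓ · exp(−σ·r^{ρ(r)}) ≤ C(σ,σ')·G_ℓ / σ'^{ℓ/ρ₀} for every ℓ ∈ ℕ₀. -/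
theorem aux_logmax {γ σ₁ s : ℝ} (hγ : 0 < γ) (hσ : 0 < σ₁) (hs : 0 < s) :
    γ * Real.log s - σ₁ * s ≤ -γ * (1 + Real.log (σ₁ / γ)) := by
  have h1 : Real.log (s * (σ₁ / γ)) ≤ s * (σ₁ / γ) - 1 :=
    Real.log_le_sub_one_of_pos (by positivity)
  rw [Real.log_mul (ne_of_gt hs) (by positivity)] at h1
  have h3 : γ * (s * (σ₁ / γ)) = σ₁ * s := by field_simp
  nlinarith [mul_le_mul_of_nonneg_left h1 hγ.le]

theorem aux_mvt (ρ : ℝ → ℝ) (hdiff : Differentiable ℝ ρ) (R m M : ℝ) (hR : 0 < R)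
    (hbound : ∀ c, R ≤ c → m ≤ deriv ρ c * c * Real.log c + ρ c ∧
        deriv ρ c * c * Real.log c + ρ c ≤ M)
    (r₁ r₂ : ℝ) (h1 : R ≤ r₁) (h12 : r₁ ≤ r₂) :
    m * (Real.log r₂ - Real.log r₁) ≤ ρ r₂ * Real.log r₂ - ρ r₁ * Real.log r₁ ∧
      ρ r₂ * Real.log r₂ - ρ r₁ * Real.log r₁ ≤ M * (Real.log r₂ - Real.log r₁) := by
  rcases eq_or_lt_of_le h12 with rfl | hlt
  · simp
  · have hr₁ : 0 < r₁ := hR.trans_le h1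
    have hcont : ∀ x ∈ Set.Icc r₁ r₂, ContinuousAt (fun x => ρ x * Real.log x) x := by
      intro x hx
      exact ((hdiff x).continuousAt).mul (Real.continuousAt_log (by nlinarith [hx.1]))
    have hgcont : ∀ x ∈ Set.Icc r₁ r₂, ContinuousAt Real.log x := by
      intro x hx; exact Real.continuousAt_log (by nlinarith [hx.1])
    obtain ⟨c, hc, heq⟩ := exists_ratio_hasDerivAt_eq_ratio_slope
      (fun x => ρ x * Real.log x) (fun x => deriv ρ x * Real.log x + ρ x * x⁻¹) hlt
      (fun x hx => (hcont x hx).continuousWithinAt)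
      (fun x hx => ((hdiff x).hasDerivAt).mul (Real.hasDerivAt_log (by nlinarith [hx.1])))
      Real.log (fun x => x⁻¹)
      (fun x hx => (hgcont x hx).continuousWithinAt)
      (fun x hx => Real.hasDerivAt_log (by nlinarith [hx.1]))
    have hc0 : 0 < c := by nlinarith [hc.1]
    have hΔ : 0 ≤ Real.log r₂ - Real.log r₁ := by
      have := Real.log_le_log hr₁ h12
      linarith
    have hkey : ρ r₂ * Real.log r₂ - ρ r₁ * Real.log r₁ =
        (Real.log r₂ - Real.log r₁) * (deriv ρ c * c * Real.log c + ρ c) := by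
      have hc0' : c ≠ 0 := hc0.ne'
      field_simp at heq
      nlinarith [heq]
    have hcb := hbound c (h1.trans hc.1.le)
    constructor
    · rw [hkey]; nlinarith [hcb.1]
    · rw [hkey]; nlinarith [hcb.2]

theorem aux_eps (ρ₀ σ' σ : ℝ) (hρ₀ : 0 < ρ₀) (hσ'0 : 0 < σ') (hσ'σ : σ' < σ) :
    ∃ ε : ℝ, 0 < ε ∧ ε < 1 ∧
      (1 + Real.log ρ₀ + Real.log σ') < (1 + Real.log (ρ₀ * σ * (1 + ε))) / (1 + ε) ∧
      (1 + Real.log ρ₀ + Real.log σ') < (1 + Real.log (ρ₀ * σ * (1 - ε))) / (1 - ε) := by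
  set c : ℝ := 1 + Real.log ρ₀ + Real.log σ' with hc_def
  have hσ0 : 0 < σ := hσ'0.trans hσ'σ
  set F : ℝ → ℝ := fun δ => (1 + Real.log (ρ₀ * σ * (1 + δ))) / (1 + δ) with hF_def
  have hF0 : F 0 = 1 + Real.log ρ₀ + Real.log σ := by
    simp [hF_def, Real.log_mul hρ₀.ne' hσ0.ne']
    ring
  have hcF0 : c < F 0 := by
    rw [hF0, hc_def]
    have := Real.log_lt_log hσ'0 hσ'σ
    linarith
  have hFcont : ContinuousAt F 0 := by
    apply ContinuousAt.div
    · apply continuousAt_const.add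
      apply (Real.continuousAt_log (by positivity)).comp
      fun_prop
    · fun_prop
    · norm_num
  have hev : ∀ᶠ δ in nhds (0:ℝ), c < F δ := hFcont.eventually (eventually_gt_nhds hcF0)
  obtain ⟨ε', hε'pos, hball⟩ := Metric.eventually_nhds_iff.mp hev
  refine ⟨min (ε'/2) (1/2), by positivity, ?_, ?_, ?_⟩
  · have : min (ε'/2) (1/2) ≤ 1/2 := min_le_right _ _
    linarith
  · have h := hball (y := min (ε'/2) (1/2)) ?_
    · exact h
    · rw [Real.dist_eq, sub_zero, abs_of_pos (by positivity)]
      have := min_le_left (ε'/2) (1/2); linarith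
  · have h := hball (y := -(min (ε'/2) (1/2))) ?_
    · simp only [hF_def] at h
      rw [show (1:ℝ) + -(min (ε'/2) (1/2)) = 1 - min (ε'/2) (1/2) by ring] at h
      exact h
    · rw [Real.dist_eq, sub_zero, abs_neg, abs_of_pos (by positivity)]
      have := min_le_left (ε'/2) (1/2); linarith

set_option maxHeartbeats 1600000 in
/-- Norm estimate for monomials: for 0 < σ' < σ there is C(σ,σ') > 0 with
r^ℓ·exp(−σ r^{ρ(r)}) ≤ C·G_ℓ/σ'^{ℓ/ρ₀} for all r ≥ 0 and ℓ ∈ ℕ₀. -/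
theorem stmt_8 (ρ : ℝ → ℝ) (ρ₀ : ℝ) (hρ₀ : 0 < ρ₀)
    (hdiff : Differentiable ℝ ρ)
    (hpos : ∀ r, 0 ≤ r → 0 ≤ ρ r)
    (hlim : Filter.Tendsto ρ Filter.atTop (nhds ρ₀))
    (hder : Filter.Tendsto (fun r => deriv ρ r * r * Real.log r) Filter.atTop (nhds 0))
    (hmono : StrictMonoOn (fun r => r ^ ρ r) (Set.Ioi (0:ℝ)))
    (hzero : Filter.Tendsto (fun r => r ^ ρ r) (nhdsWithin 0 (Set.Ioi 0)) (nhds 0))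
    (φ : ℝ → ℝ) (hφpos : ∀ t, 0 < t → 0 < φ t)
    (hφ : ∀ r, 0 < r → φ (r ^ ρ r) = r)
    (hφ' : ∀ t, 0 < t → (φ t) ^ ρ (φ t) = t)
    (G : ℕ → ℝ) (hG0 : G 0 = 1)
    (hG : ∀ ℓ : ℕ, 0 < ℓ → G ℓ = φ (ℓ : ℝ) ^ ℓ / (Real.exp 1 * ρ₀) ^ ((ℓ : ℝ) / ρ₀)) :
    ∀ σ' σ : ℝ, 0 < σ' → σ' < σ → ∃ C > (0:ℝ), ∀ ℓ : ℕ, ∀ r : ℝ, 0 ≤ r →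
      r ^ ℓ * Real.exp (-σ * r ^ ρ r) ≤ C * G ℓ / σ' ^ ((ℓ : ℝ) / ρ₀) := by
  intro σ' σ hσ'0 hσ'σ
  have hσ0 : 0 < σ := hσ'0.trans hσ'σ
  obtain ⟨ε, hε0, hε1, hFp, hFm⟩ := aux_eps ρ₀ σ' σ hρ₀ hσ'0 hσ'σ
  have h1ε : (0:ℝ) < 1 - ε := by linarith
  have h1ε' : (0:ℝ) < 1 + ε := by linarith
  set K' : ℝ := (1 + Real.log ρ₀ + Real.log σ') / ρ₀ with hK'def
  -- obtain R from the limit hypotheses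
  have hδ : (0:ℝ) < ρ₀ * ε / 2 := by positivity
  obtain ⟨R₀, hR₀⟩ := Filter.eventually_atTop.mp
    (((Metric.tendsto_nhds.mp hlim) _ hδ).and ((Metric.tendsto_nhds.mp hder) _ hδ))
  set R : ℝ := max R₀ 1 with hRdef
  have hR1 : (1:ℝ) ≤ R := le_max_right _ _
  have hRpos : (0:ℝ) < R := lt_of_lt_of_le one_pos hR1
  have hbound : ∀ c, R ≤ c → ρ₀ * (1 - ε) ≤ deriv ρ c * c * Real.log c + ρ c ∧
      deriv ρ c * c * Real.log c + ρ c ≤ ρ₀ * (1 + ε) := by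
    intro c hc
    have h := hR₀ c (le_trans (le_max_left _ _) hc)
    rw [Real.dist_eq, Real.dist_eq, sub_zero] at h
    obtain ⟨ha, hb⟩ := h
    rw [abs_lt] at ha hb
    constructor <;> nlinarith [ha.1, ha.2, hb.1, hb.2]
  have key := aux_mvt ρ hdiff R (ρ₀ * (1 - ε)) (ρ₀ * (1 + ε)) hRpos hbound
  set T : ℝ := R ^ ρ R with hTdef
  have hT0 : (0:ℝ) < T := Real.rpow_pos_of_pos hRpos _
  have hlogT : Real.log T = ρ R * Real.log R := by rw [hTdef]; exact Real.log_rpow hRpos _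
  have hVle : ∀ a b : ℝ, 0 < a → 0 < b → (a ^ ρ a ≤ b ^ ρ b ↔ a ≤ b) :=
    fun a b ha hb => hmono.le_iff_le (Set.mem_Ioi.mpr ha) (Set.mem_Ioi.mpr hb)
  set γ₁ : ℝ := 1 / (ρ₀ * (1 - ε)) with hγ₁def
  set γ₂ : ℝ := 1 / (ρ₀ * (1 + ε)) with hγ₂def
  have hγ₁pos : 0 < γ₁ := by rw [hγ₁def]; positivity
  have hγ₂pos : 0 < γ₂ := by rw [hγ₂def]; positivity
  have hγ₁inv : γ₁ * (ρ₀ * (1 - ε)) = 1 := by rw [hγ₁def]; field_simp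
  have hγ₂inv : γ₂ * (ρ₀ * (1 + ε)) = 1 := by rw [hγ₂def]; field_simp
  have hbnd₁ : -γ₁ * (1 + Real.log (σ / γ₁)) ≤ -K' := by
    have harg : σ / γ₁ = ρ₀ * σ * (1 - ε) := by rw [hγ₁def]; field_simp
    rw [harg, hK'def]
    have heq : γ₁ * (1 + Real.log (ρ₀ * σ * (1 - ε)))
        = (1 + Real.log (ρ₀ * σ * (1 - ε))) / (ρ₀ * (1 - ε)) := by rw [hγ₁def]; ring
    have h6 := mul_le_mul_of_nonneg_left hFm.le (le_of_lt (inv_pos.mpr hρ₀))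
    have h7 : ρ₀⁻¹ * ((1 + Real.log (ρ₀ * σ * (1 - ε))) / (1 - ε))
        = (1 + Real.log (ρ₀ * σ * (1 - ε))) / (ρ₀ * (1 - ε)) := by
      field_simp
    have h8 : ρ₀⁻¹ * (1 + Real.log ρ₀ + Real.log σ')
        = (1 + Real.log ρ₀ + Real.log σ') / ρ₀ := by ring
    linarith
  have hbnd₂ : -γ₂ * (1 + Real.log (σ / γ₂)) ≤ -K' := by
    have harg : σ / γ₂ = ρ₀ * σ * (1 + ε) := by rw [hγ₂def]; field_simp
    rw [harg, hK'def]
    have heq : γ₂ * (1 + Real.log (ρ₀ * σ * (1 + ε)))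
        = (1 + Real.log (ρ₀ * σ * (1 + ε))) / (ρ₀ * (1 + ε)) := by rw [hγ₂def]; ring
    have h6 := mul_le_mul_of_nonneg_left hFp.le (le_of_lt (inv_pos.mpr hρ₀))
    have h7 : ρ₀⁻¹ * ((1 + Real.log (ρ₀ * σ * (1 + ε))) / (1 + ε))
        = (1 + Real.log (ρ₀ * σ * (1 + ε))) / (ρ₀ * (1 + ε)) := by
      field_simp
    have h8 : ρ₀⁻¹ * (1 + Real.log ρ₀ + Real.log σ')
        = (1 + Real.log ρ₀ + Real.log σ') / ρ₀ := by ring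
    linarith
  obtain ⟨N, hN⟩ := exists_nat_ge (max T (Real.exp (Real.log T + K' * (ρ₀ * (1 + ε)))))
  set D : ℕ → ℝ := fun ℓ =>
    ((ℓ:ℝ) * Real.log R + max 0 (-(γ₁ * (ℓ:ℝ)) * (1 + Real.log (σ * T / (γ₁ * (ℓ:ℝ))))))
      - ((ℓ:ℝ) * Real.log (φ (ℓ:ℝ)) - (ℓ:ℝ) * K') with hDdef
  set S : ℝ := ∑ i ∈ Finset.range N, |D i| with hSdef
  have hS0 : 0 ≤ S := by rw [hSdef]; exact Finset.sum_nonneg (fun i _ => abs_nonneg _)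
  clear_value K' R T γ₁ γ₂ D S
  refine ⟨Real.exp S, Real.exp_pos S, ?_⟩
  intro ℓ r hr
  rcases Nat.eq_zero_or_pos ℓ with rfl | hℓpos
  · simp only [pow_zero, one_mul, hG0, mul_one, Nat.cast_zero, zero_div, Real.rpow_zero, div_one]
    have h1 : 0 ≤ r ^ ρ r := Real.rpow_nonneg hr _
    apply Real.exp_le_exp.mpr
    nlinarith
  · have hℓR : (0:ℝ) < (ℓ:ℝ) := Nat.cast_pos.mpr hℓpos
    have hφℓpos : 0 < φ (ℓ:ℝ) := hφpos _ hℓR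
    have hGℓ : (0:ℝ) < G ℓ := by
      rw [hG ℓ hℓpos]
      have := Real.rpow_pos_of_pos (by positivity : (0:ℝ) < Real.exp 1 * ρ₀) ((ℓ:ℝ)/ρ₀)
      positivity
    rcases eq_or_lt_of_le hr with rfl | hr0
    · rw [zero_pow hℓpos.ne', zero_mul]
      have : 0 < Real.exp S * G ℓ / σ' ^ ((ℓ:ℝ)/ρ₀) :=
        div_pos (mul_pos (Real.exp_pos _) hGℓ) (Real.rpow_pos_of_pos hσ'0 _)
      linarith
    · set t : ℝ := r ^ ρ r with htdef
      have ht0 : 0 < t := Real.rpow_pos_of_pos hr0 _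
      have hlogt : Real.log t = ρ r * Real.log r := by rw [htdef]; exact Real.log_rpow hr0 _
      suffices h : (ℓ:ℝ) * Real.log r - σ * t ≤ S + ((ℓ:ℝ) * Real.log (φ (ℓ:ℝ)) - (ℓ:ℝ) * K') by
        have hLHS : r ^ ℓ * Real.exp (-σ * t) = Real.exp ((ℓ:ℝ) * Real.log r - σ * t) := by
          rw [← Real.exp_log (pow_pos hr0 ℓ), Real.log_pow, ← Real.exp_add]
          congr 1
          ring
        have hRHS : Real.exp S * G ℓ / σ' ^ ((ℓ:ℝ)/ρ₀)
            = Real.exp (S + ((ℓ:ℝ) * Real.log (φ (ℓ:ℝ)) - (ℓ:ℝ) * K')) := by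
          rw [hG ℓ hℓpos, ← Real.exp_log (pow_pos hφℓpos ℓ), Real.log_pow,
            Real.rpow_def_of_pos (by positivity : (0:ℝ) < Real.exp 1 * ρ₀),
            Real.rpow_def_of_pos hσ'0,
            Real.log_mul (Real.exp_ne_zero 1) hρ₀.ne', Real.log_exp,
            ← Real.exp_sub, ← Real.exp_add, ← Real.exp_sub]
          rw [Real.exp_eq_exp, hK'def]
          field_simp
          ring
        rw [hLHS, hRHS]
        exact Real.exp_le_exp.mpr h
      have hρφℓ : ρ (φ (ℓ:ℝ)) * Real.log (φ (ℓ:ℝ)) = Real.log (ℓ:ℝ) := by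
        rw [← Real.log_rpow hφℓpos, hφ' _ hℓR]
      by_cases hℓN : N ≤ ℓ
      · -- large ℓ
        have hℓN₀ : max T (Real.exp (Real.log T + K' * (ρ₀ * (1 + ε)))) ≤ (ℓ:ℝ) :=
          le_trans hN (Nat.cast_le.mpr hℓN)
        have hTℓ : T ≤ (ℓ:ℝ) := le_trans (le_max_left _ _) hℓN₀
        have hlogℓ : Real.log T + K' * (ρ₀ * (1 + ε)) ≤ Real.log (ℓ:ℝ) := by
          have h1 := le_trans (le_max_right _ _) hℓN₀
          have h2 := Real.log_le_log (Real.exp_pos _) h1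
          rwa [Real.log_exp] at h2
        have hRφℓ : R ≤ φ (ℓ:ℝ) := by
          refine (hVle R (φ (ℓ:ℝ)) hRpos hφℓpos).mp ?_
          rw [hφ' _ hℓR, ← hTdef]
          exact hTℓ
        rcases le_or_gt (ℓ:ℝ) t with h1 | h1
        · -- ℓ ≤ t
          have hφℓr : φ (ℓ:ℝ) ≤ r := by
            refine (hVle (φ (ℓ:ℝ)) r hφℓpos hr0).mp ?_
            rw [hφ' _ hℓR, ← htdef]
            exact h1
          obtain ⟨hlow, -⟩ := key (φ (ℓ:ℝ)) r hRφℓ hφℓr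
          rw [hρφℓ, ← hlogt] at hlow
          have hs0 : 0 < t / (ℓ:ℝ) := div_pos ht0 hℓR
          have hA := aux_logmax hγ₁pos hσ0 hs0
          rw [Real.log_div ht0.ne' hℓR.ne'] at hA
          have e1 : Real.log r ≤ Real.log (φ (ℓ:ℝ)) + γ₁ * (Real.log t - Real.log (ℓ:ℝ)) := by
            have h3 := mul_le_mul_of_nonneg_left hlow hγ₁pos.le
            rw [← mul_assoc, hγ₁inv, one_mul] at h3
            linarith
          have e5 : (ℓ:ℝ) * (σ * (t / (ℓ:ℝ))) = σ * t := by field_simp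
          have E1 := mul_le_mul_of_nonneg_left e1 hℓR.le
          have E2 := mul_le_mul_of_nonneg_left (hA.trans hbnd₁) hℓR.le
          rw [mul_add] at E1
          rw [mul_sub, e5] at E2
          linarith [E1, E2, hS0]
        · rcases le_or_gt T t with h2 | h2
          · -- T ≤ t ≤ ℓ
            have hrR : R ≤ r := by
              refine (hVle R r hRpos hr0).mp ?_
              rw [← hTdef, ← htdef]; exact h2
            have hrφℓ : r ≤ φ (ℓ:ℝ) := by
              refine (hVle r (φ (ℓ:ℝ)) hr0 hφℓpos).mp ?_
              rw [hφ' _ hℓR, ← htdef]; exact h1.le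
            obtain ⟨-, hup⟩ := key r (φ (ℓ:ℝ)) hrR hrφℓ
            rw [hρφℓ, ← hlogt] at hup
            have hs0 : 0 < t / (ℓ:ℝ) := div_pos ht0 hℓR
            have hA := aux_logmax hγ₂pos hσ0 hs0
            rw [Real.log_div ht0.ne' hℓR.ne'] at hA
            have e1 : Real.log r ≤ Real.log (φ (ℓ:ℝ)) + γ₂ * (Real.log t - Real.log (ℓ:ℝ)) := by
              have h3 := mul_le_mul_of_nonneg_left hup hγ₂pos.le
              rw [← mul_assoc, hγ₂inv, one_mul] at h3
              linarith
            have e5 : (ℓ:ℝ) * (σ * (t / (ℓ:ℝ))) = σ * t := by field_simp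
            have E1 := mul_le_mul_of_nonneg_left e1 hℓR.le
            have E2 := mul_le_mul_of_nonneg_left (hA.trans hbnd₂) hℓR.le
            rw [mul_add] at E1
            rw [mul_sub, e5] at E2
            linarith [E1, E2, hS0]
          · -- t < T
            have hrR : r ≤ R := by
              have := (hVle r R hr0 hRpos).mp (by rw [← hTdef, ← htdef]; exact h2.le)
              exact this
            obtain ⟨-, hup⟩ := key R (φ (ℓ:ℝ)) le_rfl hRφℓ
            rw [hρφℓ, ← hlogT] at hup
            have hlogrR : Real.log r ≤ Real.log R := Real.log_le_log hr0 hrR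
            have e1 : Real.log r ≤ Real.log (φ (ℓ:ℝ)) - K' := by
              have h3 := mul_le_mul_of_nonneg_left hup hγ₂pos.le
              rw [← mul_assoc, hγ₂inv, one_mul] at h3
              have h4 := mul_le_mul_of_nonneg_left
                (by linarith : K' * (ρ₀ * (1 + ε)) ≤ Real.log (ℓ:ℝ) - Real.log T) hγ₂pos.le
              have h5 : γ₂ * (K' * (ρ₀ * (1 + ε))) = K' := by
                rw [← mul_assoc]
                rw [show γ₂ * K' * (ρ₀ * (1+ε)) = K' * (γ₂ * (ρ₀ * (1+ε))) by ring, hγ₂inv]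
                ring
              linarith [h3, h4, h5, hlogrR]
            have E1 := mul_le_mul_of_nonneg_left e1 hℓR.le
            rw [mul_sub] at E1
            linarith [E1, hS0, mul_pos hσ0 ht0]
      · -- small ℓ
        push_neg at hℓN
        have hDS : D ℓ ≤ S := by
          calc D ℓ ≤ |D ℓ| := le_abs_self _
            _ ≤ S := by
                rw [hSdef]
                exact Finset.single_le_sum (f := fun i => |D i|)
                  (fun i _ => abs_nonneg _) (Finset.mem_range.mpr hℓN)
        have hDℓ : D ℓ = ((ℓ:ℝ) * Real.log R
            + max 0 (-(γ₁ * (ℓ:ℝ)) * (1 + Real.log (σ * T / (γ₁ * (ℓ:ℝ))))))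
            - ((ℓ:ℝ) * Real.log (φ (ℓ:ℝ)) - (ℓ:ℝ) * K') := by rw [hDdef]
        suffices hB : (ℓ:ℝ) * Real.log r - σ * t ≤ (ℓ:ℝ) * Real.log R
            + max 0 (-(γ₁ * (ℓ:ℝ)) * (1 + Real.log (σ * T / (γ₁ * (ℓ:ℝ))))) by
          linarith [hDS, hDℓ.le, hDℓ.ge]
        rcases le_or_gt r R with h1 | h1
        · have hlogrR : Real.log r ≤ Real.log R := Real.log_le_log hr0 h1
          have E1 := mul_le_mul_of_nonneg_left hlogrR hℓR.le
          have hmax : (0:ℝ) ≤ max 0 (-(γ₁ * (ℓ:ℝ)) * (1 + Real.log (σ * T / (γ₁ * (ℓ:ℝ))))) :=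
            le_max_left _ _
          linarith [E1, hmax, mul_pos hσ0 ht0]
        · have hTt : T ≤ t := by
            rw [hTdef, htdef]
            exact (hVle R r hRpos hr0).mpr h1.le
          obtain ⟨hlow, -⟩ := key R r le_rfl h1.le
          rw [← hlogt, ← hlogT] at hlow
          have e1 : Real.log r ≤ Real.log R + γ₁ * (Real.log t - Real.log T) := by
            have h3 := mul_le_mul_of_nonneg_left hlow hγ₁pos.le
            rw [← mul_assoc, hγ₁inv, one_mul] at h3
            linarith
          have hγℓ : 0 < γ₁ * (ℓ:ℝ) := mul_pos hγ₁pos hℓR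
          have hs0 : 0 < t / T := div_pos ht0 hT0
          have hA := aux_logmax (γ := γ₁ * (ℓ:ℝ)) (σ₁ := σ * T) (s := t / T) hγℓ
            (by positivity) hs0
          rw [Real.log_div ht0.ne' hT0.ne'] at hA
          have e5 : σ * T * (t / T) = σ * t := by field_simp
          have hmax : -(γ₁ * (ℓ:ℝ)) * (1 + Real.log (σ * T / (γ₁ * (ℓ:ℝ))))
              ≤ max 0 (-(γ₁ * (ℓ:ℝ)) * (1 + Real.log (σ * T / (γ₁ * (ℓ:ℝ))))) :=
            le_max_right _ _
          have E1 := mul_le_mul_of_nonneg_left e1 hℓR.le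
          rw [mul_add] at E1
          linarith [E1, hA, e5, hmax]
end

section
/- Let ρ be a normalized proximate order function with limit ρ₀ > 0, φ the inverse of r ↦ r^{ρ(r)}, and let f(z) = Σ_{ℓ≥0} a_ℓ·z^ℓ be an entire function on ℂ with σ ≥ 0. If for every ε > 0 there exists D_ε > 0 such that |f(z)| ≤ D_ε·exp((σ+ε)·|z|^{ρ(|z|)}) for all z, then limsup_{ℓ→∞} |a_ℓ|^{1/ℓ}·φ(ℓ) ≤ (e·ρ₀·σ)^{1/ρ₀}. -/
/-!
Write `V r = r ^ ρ r`. Cauchy's estimate on the circle `|z| = r` gives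
`|a n| r ^ n ≤ D exp (s V r)` with `s = σ + ε`; on the circle where `V r = n / (s ρ₀)` this
reads `|a n| ^ (1/n) ≤ D ^ (1/n) e ^ (1/ρ₀) / r`. The condition `ρ' r · r log r → 0` makes `V`
regularly varying, `V (l r) / V r → l ^ ρ₀`, so for `l ^ ρ₀ > s ρ₀` eventually `V (l r) > n`,
i.e. `φ n < l r`. Hence the limsup is at most `e ^ (1/ρ₀) l`; let `l ↓ (s ρ₀) ^ (1/ρ₀)` and
`ε ↓ 0`.
-/

open Filter Real Topology Set

theorem hasFPowerSeriesOnBall_ofScalars_of_forall_hasSum {f : ℂ → ℂ} {a : ℕ → ℂ}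
    (hsum : ∀ z, HasSum (fun n => a n * z ^ n) (f z)) :
    HasFPowerSeriesOnBall f (FormalMultilinearSeries.ofScalars ℂ a) 0 ⊤ := by
  have hrad : (FormalMultilinearSeries.ofScalars ℂ a).radius = ⊤ :=
    FormalMultilinearSeries.radius_eq_top_of_summable_norm _ fun s => by
      simpa [FormalMultilinearSeries.ofScalars_norm] using summable_norm_iff.mpr (hsum s).summable
  refine ⟨hrad.ge, ENNReal.zero_lt_top, fun {y} _ => ?_⟩
  simpa [FormalMultilinearSeries.ofScalars_apply_eq, mul_comm] using hsum y

theorem norm_mul_pow_le_of_forall_hasSum {f : ℂ → ℂ} {a : ℕ → ℂ}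
    (hsum : ∀ z, HasSum (fun n => a n * z ^ n) (f z)) {r C : ℝ} (hr : 0 < r)
    (hC : ∀ z, ‖z‖ = r → ‖f z‖ ≤ C) (n : ℕ) : ‖a n‖ * r ^ n ≤ C := by
  have hf := hasFPowerSeriesOnBall_ofScalars_of_forall_hasSum hsum
  have hdiff : Differentiable ℂ f := fun z => (hf.analyticAt_of_mem (by simp)).differentiableAt
  have hderiv : iteratedDeriv n f 0 = n.factorial • a n := by
    rw [iteratedDeriv_eq_iteratedFDeriv, ← hf.factorial_smul 1 n,
      FormalMultilinearSeries.ofScalars_apply_eq]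
    simp
  have hcauchy := Complex.norm_iteratedDeriv_le_of_forall_mem_sphere_norm_le (c := 0) n hr
    hdiff.diffContOnCl fun z hz => hC z (by simpa using hz)
  rw [hderiv, nsmul_eq_mul, norm_mul, Complex.norm_natCast, le_div_iff₀ (by positivity), mul_assoc,
    mul_le_mul_iff_right₀ (by positivity)] at hcauchy
  exact hcauchy

theorem tendsto_sub_comp_add_of_tendsto_deriv {g g' : ℝ → ℝ}
    (hg : ∀ u, HasDerivAt g (g' u) u) (hg' : Tendsto g' atTop (𝓝 0)) (h : ℝ) :
    Tendsto (fun u => g (u + h) - g u) atTop (𝓝 0) := by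
  rw [Metric.tendsto_nhds]
  intro η hη
  obtain ⟨u₀, hu₀⟩ := eventually_atTop.mp
    ((Metric.tendsto_nhds.mp hg') (η / (|h| + 1)) (by positivity))
  filter_upwards [eventually_ge_atTop u₀, eventually_ge_atTop (u₀ - h)] with u hu huh
  have hmvt := (convex_Ici u₀).norm_image_sub_le_of_norm_hasDerivWithin_le
    (fun x _ => (hg x).hasDerivWithinAt) (fun x hx => by simpa using (hu₀ x hx).le)
    (mem_Ici.mpr hu) (mem_Ici.mpr (by linarith : u₀ ≤ u + h))
  rw [dist_zero_right]
  calc ‖g (u + h) - g u‖ ≤ η / (|h| + 1) * |h| := by simpa using hmvt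
    _ < η := by
      rw [div_mul_eq_mul_div, div_lt_iff₀ (by positivity)]
      nlinarith

theorem tendsto_rpow_self_mul_div_rpow_self {ρ : ℝ → ℝ} {ρ₀ : ℝ} (hdiff : Differentiable ℝ ρ)
    (hlim : Tendsto ρ atTop (𝓝 ρ₀))
    (hder : Tendsto (fun r => deriv ρ r * r * log r) atTop (𝓝 0)) {l : ℝ} (hl : 0 < l) :
    Tendsto (fun r => (l * r) ^ ρ (l * r) / r ^ ρ r) atTop (𝓝 (l ^ ρ₀)) := by
  -- `log V (exp u) = ρ₀ u + k u` with `k' → 0`, so `log V (l r) - log V r → ρ₀ log l`.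
  set k : ℝ → ℝ := fun u => (ρ (exp u) - ρ₀) * u
  set k' : ℝ → ℝ := fun u => deriv ρ (exp u) * exp u * u + (ρ (exp u) - ρ₀)
  have hk : ∀ u, HasDerivAt k (k' u) u := fun u => by
    have := (((hdiff (exp u)).hasDerivAt.comp u (hasDerivAt_exp u)).sub_const ρ₀).mul
      (hasDerivAt_id' u)
    exact this.congr_deriv (by simp [k'])
  have hk' : Tendsto k' atTop (𝓝 0) := by
    have h1 := hder.comp tendsto_exp_atTop
    have h2 := (hlim.comp tendsto_exp_atTop).sub_const ρ₀
    simpa [k', Function.comp_def] using h1.add h2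
  have hlog : Tendsto (fun u => exp (k (u + log l) - k u + ρ₀ * log l)) atTop
      (𝓝 (l ^ ρ₀)) := by
    rw [rpow_def_of_pos hl, mul_comm (log l)]
    simpa using ((tendsto_sub_comp_add_of_tendsto_deriv hk hk' (log l)).add_const
      (ρ₀ * log l)).rexp
  refine (hlog.comp tendsto_log_atTop).congr' ?_
  filter_upwards [eventually_gt_atTop 0] with r hr
  have hlr : 0 < l * r := by positivity
  simp only [Function.comp_apply, k, ← log_mul hr.ne' hl.ne', exp_log hr,
    exp_log (by positivity : 0 < r * l)]
  rw [rpow_def_of_pos hlr, rpow_def_of_pos hr, ← exp_sub, mul_comm r l, log_mul hl.ne' hr.ne']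
  congr 1
  ring

theorem lt_of_lt_apply_of_rightInverse {V φ : ℝ → ℝ} (hV : MonotoneOn V (Ioi 0))
    (hVφ : ∀ t, 0 < t → V (φ t) = t) {t x : ℝ} (ht : 0 < t) (hφt : 0 < φ t) (hx : 0 < x)
    (htx : t < V x) : φ t < x := by
  by_contra! hxφ
  have := hV hx hφt hxφ
  rw [hVφ t ht] at this
  linarith

theorem tendsto_atTop_of_rightInverse {V φ : ℝ → ℝ} (hV : MonotoneOn V (Ioi 0))
    (hφpos : ∀ t, 0 < t → 0 < φ t) (hVφ : ∀ t, 0 < t → V (φ t) = t) :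
    Tendsto φ atTop atTop := by
  refine tendsto_atTop.mpr fun M => ?_
  have hM : 0 < max M 1 := by positivity
  filter_upwards [eventually_gt_atTop (max (V (max M 1)) 0)] with t ht
  have ht₀ : 0 < t := (le_max_right _ _).trans_lt ht
  by_contra! hφt
  have := hV (hφpos t ht₀) hM (hφt.trans_le (le_max_left M 1)).le
  rw [hVφ t ht₀] at this
  linarith [le_max_left (V (max M 1)) 0]

theorem rpow_one_div_natCast_le_of_mul_pow_le {x r D E : ℝ} {n : ℕ} (hx : 0 ≤ x) (hr : 0 < r)
    (hD : 0 ≤ D) (hE : 0 ≤ E) (hn : n ≠ 0) (h : x * r ^ n ≤ D * E ^ n) :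
    x ^ (1 / (n : ℝ)) ≤ D ^ (1 / (n : ℝ)) * E / r := by
  have hx' : x ≤ D * (E / r) ^ n := by
    rw [div_pow, mul_div_assoc', le_div_iff₀ (by positivity)]
    exact h
  calc x ^ (1 / (n : ℝ)) ≤ (D * (E / r) ^ n) ^ (1 / (n : ℝ)) := by gcongr
    _ = D ^ (1 / (n : ℝ)) * E / r := by
      rw [mul_rpow hD (by positivity), one_div, pow_rpow_inv_natCast (by positivity) hn,
        mul_div_assoc]

theorem eventually_norm_rpow_mul_le {ρ : ℝ → ℝ} {ρ₀ : ℝ} (hρ₀ : 0 < ρ₀)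
    (hdiff : Differentiable ℝ ρ) (hlim : Tendsto ρ atTop (𝓝 ρ₀))
    (hder : Tendsto (fun r => deriv ρ r * r * log r) atTop (𝓝 0))
    (hmono : MonotoneOn (fun r => r ^ ρ r) (Ioi 0)) {φ : ℝ → ℝ}
    (hφpos : ∀ t, 0 < t → 0 < φ t) (hφp : ∀ t, 0 < t → φ t ^ ρ (φ t) = t)
    {f : ℂ → ℂ} {a : ℕ → ℂ} (hsum : ∀ z, HasSum (fun n => a n * z ^ n) (f z))
    {s D l : ℝ} (hs : 0 < s) (hD : 0 < D) (hfD : ∀ z, ‖f z‖ ≤ D * exp (s * ‖z‖ ^ ρ ‖z‖))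
    (hl : 0 < l) (hsl : s * ρ₀ < l ^ ρ₀) :
    ∀ᶠ n : ℕ in atTop, ‖a n‖ ^ (1 / (n : ℝ)) * φ n ≤ D ^ (1 / (n : ℝ)) * exp (1 / ρ₀) * l := by
  have hc : 0 < s * ρ₀ := by positivity
  have hgrowth : ∀ᶠ r in atTop, s * ρ₀ * r ^ ρ r < (l * r) ^ ρ (l * r) := by
    filter_upwards [(tendsto_rpow_self_mul_div_rpow_self hdiff hlim hder hl).eventually_const_lt
      hsl, eventually_gt_atTop 0] with r hr hr₀
    rwa [lt_div_iff₀ (by positivity)] at hr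
  have hradius : Tendsto (fun n : ℕ => φ (n / (s * ρ₀))) atTop atTop :=
    (tendsto_atTop_of_rightInverse hmono hφpos hφp).comp
      (tendsto_natCast_atTop_atTop.atTop_div_const hc)
  filter_upwards [hradius.eventually hgrowth, eventually_ne_atTop 0] with n hn hn₀
  have hn₀' : (0 : ℝ) < n := by positivity
  set r := φ (n / (s * ρ₀))
  have hr : 0 < r := hφpos _ (by positivity)
  have hVr : r ^ ρ r = n / (s * ρ₀) := hφp _ (by positivity)
  have hcoeff : ‖a n‖ * r ^ n ≤ D * exp (1 / ρ₀) ^ n := by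
    calc ‖a n‖ * r ^ n ≤ D * exp (s * r ^ ρ r) :=
          norm_mul_pow_le_of_forall_hasSum hsum hr (fun z hz => hz ▸ hfD z) n
      _ = D * exp (1 / ρ₀) ^ n := by
          rw [hVr, ← exp_nat_mul]
          congr 2
          field_simp
  have hφn : φ n < l * r := by
    refine lt_of_lt_apply_of_rightInverse hmono hφp hn₀' (hφpos _ hn₀') (by positivity) ?_
    rwa [hVr, mul_div_cancel₀ _ hc.ne'] at hn
  calc ‖a n‖ ^ (1 / (n : ℝ)) * φ n
      ≤ D ^ (1 / (n : ℝ)) * exp (1 / ρ₀) / r * (l * r) :=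
        mul_le_mul (rpow_one_div_natCast_le_of_mul_pow_le (norm_nonneg _) hr hD.le
          (exp_pos _).le hn₀ hcoeff) hφn.le (hφpos _ hn₀').le (by positivity)
    _ = D ^ (1 / (n : ℝ)) * exp (1 / ρ₀) * l := by field_simp

theorem limsup_norm_rpow_mul_le {ρ : ℝ → ℝ} {ρ₀ : ℝ} (hρ₀ : 0 < ρ₀)
    (hdiff : Differentiable ℝ ρ) (hlim : Tendsto ρ atTop (𝓝 ρ₀))
    (hder : Tendsto (fun r => deriv ρ r * r * log r) atTop (𝓝 0))
    (hmono : MonotoneOn (fun r => r ^ ρ r) (Ioi 0)) {φ : ℝ → ℝ}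
    (hφpos : ∀ t, 0 < t → 0 < φ t) (hφp : ∀ t, 0 < t → φ t ^ ρ (φ t) = t)
    {f : ℂ → ℂ} {a : ℕ → ℂ} (hsum : ∀ z, HasSum (fun n => a n * z ^ n) (f z))
    {s D : ℝ} (hs : 0 < s) (hD : 0 < D) (hfD : ∀ z, ‖f z‖ ≤ D * exp (s * ‖z‖ ^ ρ ‖z‖)) :
    limsup (fun n : ℕ => ‖a n‖ ^ (1 / (n : ℝ)) * φ n) atTop ≤ (exp 1 * ρ₀ * s) ^ (1 / ρ₀) := by
  have hcobdd : IsCoboundedUnder (· ≤ ·) atTop fun n : ℕ => ‖a n‖ ^ (1 / (n : ℝ)) * φ n := by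
    refine IsBoundedUnder.isCoboundedUnder_le (isBoundedUnder_of_eventually_ge (a := 0) ?_)
    filter_upwards [eventually_gt_atTop 0] with n hn
    have := hφpos n (by exact_mod_cast hn)
    positivity
  have hlimsup_le : ∀ l, (s * ρ₀) ^ (1 / ρ₀) < l →
      limsup (fun n : ℕ => ‖a n‖ ^ (1 / (n : ℝ)) * φ n) atTop ≤ exp (1 / ρ₀) * l := by
    intro l hl
    have hl₀ : 0 < l := lt_of_le_of_lt (by positivity) hl
    rw [one_div, rpow_inv_lt_iff_of_pos (by positivity) hl₀.le hρ₀] at hl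
    have hroot : Tendsto (fun n : ℕ => D ^ (1 / (n : ℝ)) * exp (1 / ρ₀) * l) atTop
        (𝓝 (exp (1 / ρ₀) * l)) := by
      have := ((tendsto_const_nhds (x := D)).rpow (tendsto_const_div_atTop_nhds_zero_nat 1)
        (Or.inl hD.ne')).mul_const (exp (1 / ρ₀)) |>.mul_const l
      simpa [mul_assoc] using this
    calc limsup (fun n : ℕ => ‖a n‖ ^ (1 / (n : ℝ)) * φ n) atTop
        ≤ limsup (fun n : ℕ => D ^ (1 / (n : ℝ)) * exp (1 / ρ₀) * l) atTop :=
          limsup_le_limsup (eventually_norm_rpow_mul_le hρ₀ hdiff hlim hder hmono hφpos hφp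
            hsum hs hD hfD hl₀ hl) hcobdd hroot.isBoundedUnder_le
      _ = exp (1 / ρ₀) * l := hroot.limsup_eq
  have hsplit : (exp 1 * ρ₀ * s) ^ (1 / ρ₀) = exp (1 / ρ₀) * (s * ρ₀) ^ (1 / ρ₀) := by
    rw [mul_assoc, mul_comm ρ₀, mul_rpow (exp_pos 1).le (by positivity), ← exp_mul, one_mul]
  rw [hsplit, ← div_le_iff₀' (exp_pos _)]
  refine le_of_forall_gt_imp_ge_of_dense fun l hl => ?_
  rw [div_le_iff₀' (exp_pos _)]
  exact hlimsup_le l hl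

theorem stmt_10_general (ρ : ℝ → ℝ) (ρ₀ : ℝ) (hρ₀ : 0 < ρ₀)
    (hdiff : Differentiable ℝ ρ)
    (hlim : Filter.Tendsto ρ Filter.atTop (nhds ρ₀))
    (hder : Filter.Tendsto (fun r => deriv ρ r * r * Real.log r) Filter.atTop (nhds 0))
    (hmono : StrictMonoOn (fun r => r ^ ρ r) (Set.Ioi (0:ℝ)))
    (φ : ℝ → ℝ) (hφpos : ∀ t, 0 < t → 0 < φ t)
    (hφp : ∀ t, 0 < t → (φ t) ^ ρ (φ t) = t)
    (f : ℂ → ℂ) (a : ℕ → ℂ)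
    (hsum : ∀ z : ℂ, HasSum (fun ℓ : ℕ => a ℓ * z ^ ℓ) (f z))
    (σ : ℝ) (hσ : 0 ≤ σ)
    (hbound : ∀ ε > (0:ℝ), ∃ D > (0:ℝ), ∀ z : ℂ,
      ‖f z‖ ≤ D * Real.exp ((σ + ε) * ‖z‖ ^ ρ ‖z‖)) :
    Filter.limsup
        (fun ℓ : ℕ => ‖a ℓ‖ ^ (1 / (ℓ : ℝ)) * φ (ℓ : ℝ)) Filter.atTop ≤
      (Real.exp 1 * ρ₀ * σ) ^ (1 / ρ₀) := by
  have hcont : Tendsto (fun ε => (exp 1 * ρ₀ * (σ + ε)) ^ (1 / ρ₀)) (𝓝[>] 0)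
      (𝓝 ((exp 1 * ρ₀ * σ) ^ (1 / ρ₀))) := by
    have : Tendsto (fun ε => exp 1 * ρ₀ * (σ + ε)) (𝓝 0) (𝓝 (exp 1 * ρ₀ * σ)) := by
      simpa using (continuous_const.mul (continuous_const.add continuous_id)).tendsto
        (f := fun ε : ℝ => exp 1 * ρ₀ * (σ + ε)) 0
    exact (this.mono_left nhdsWithin_le_nhds).rpow_const (Or.inr (by positivity))
  refine ge_of_tendsto hcont (eventually_nhdsWithin_of_forall fun ε (hε : 0 < ε) => ?_)
  obtain ⟨D, hD, hfD⟩ := hbound ε hε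
  exact limsup_norm_rpow_mul_le hρ₀ hdiff hlim hder hmono.monotoneOn hφpos hφp hsum
    (by positivity) hD hfD

/-- Growth bound implies coefficient bound: (1) ⇒ (3) of Theorem 3.9, complex version. -/
theorem stmt_10 (ρ : ℝ → ℝ) (ρ₀ : ℝ) (hρ₀ : 0 < ρ₀)
    (hdiff : Differentiable ℝ ρ)
    (hpos : ∀ r, 0 ≤ r → 0 ≤ ρ r)
    (hlim : Filter.Tendsto ρ Filter.atTop (nhds ρ₀))
    (hder : Filter.Tendsto (fun r => deriv ρ r * r * Real.log r) Filter.atTop (nhds 0))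
    (hmono : StrictMonoOn (fun r => r ^ ρ r) (Set.Ioi (0:ℝ)))
    (hzero : Filter.Tendsto (fun r => r ^ ρ r) (nhdsWithin 0 (Set.Ioi 0)) (nhds 0))
    (φ : ℝ → ℝ) (hφpos : ∀ t, 0 < t → 0 < φ t)
    (hφ : ∀ r, 0 < r → φ (r ^ ρ r) = r)
    (hφp : ∀ t, 0 < t → (φ t) ^ ρ (φ t) = t)
    (f : ℂ → ℂ) (a : ℕ → ℂ)
    (hsum : ∀ z : ℂ, HasSum (fun ℓ : ℕ => a ℓ * z ^ ℓ) (f z))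
    (σ : ℝ) (hσ : 0 ≤ σ)
    (hbound : ∀ ε > (0:ℝ), ∃ D > (0:ℝ), ∀ z : ℂ,
      ‖f z‖ ≤ D * Real.exp ((σ + ε) * ‖z‖ ^ ρ ‖z‖)) :
    Filter.limsup
        (fun ℓ : ℕ => ‖a ℓ‖ ^ (1 / (ℓ : ℝ)) * φ (ℓ : ℝ)) Filter.atTop ≤
      (Real.exp 1 * ρ₀ * σ) ^ (1 / ρ₀) :=
  stmt_10_general ρ ρ₀ hρ₀ hdiff hlim hder hmono φ hφpos hφp f a hsum σ hσ hbound
end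

section
/- Let ρ be a normalized proximate order function with limit ρ₀ > 0, φ the inverse of r ↦ r^{ρ(r)}, and let (a_ℓ) be a sequence of complex numbers and σ ≥ 0 with (1/ρ₀)·ln σ ≥ limsup_{ℓ→∞} ((1/ℓ)·ln|a_ℓ| + ln φ(ℓ)) − 1/ρ₀ − (ln ρ₀)/ρ₀ (where ln 0 = −∞). Then for every τ' > σ there exist N ∈ ℕ and C > 0 such that sup_{ℓ ≥ N} (ln|a_ℓ| + ℓ·ln r) ≤ τ'·r^{ρ(r)} + C for all r > 0. -/
/-!
Write `V r = r ^ ρ r`. Since `u ↦ log V (exp u) = ρ (exp u) * u` has derivative tending to `ρ₀`,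
for large `R ≤ r` the ratio `V r / V R` lies between `(r / R) ^ (ρ₀ - ε)` and `(r / R) ^ (ρ₀ + ε)`.
Fix `ℓ` and split the radii at `R = φ (c ℓ)` for a small constant `c`. Below `R`,
`ℓ log r ≤ ℓ log R ≤ ℓ (log φ ℓ - q)` for a prescribed `q`. Above `R`,
`V r ≥ c ℓ (r / R) ^ (ρ₀ - ε)`, and maximising `ℓ x - τ c ℓ exp ((ρ₀ - ε) x)` in `x` shows
`ℓ log r - τ V r ≤ ℓ (log φ ℓ - B)` for every `B < (1 + log (τ ρ₀)) / ρ₀`. The limsup hypothesis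
gives `log |a ℓ| ≤ ℓ (B - log φ ℓ)` for such a `B` (with `τ = τ'`), and the two bounds add up to
at most `0`.
-/

open Filter Real Topology

theorem mul_sub_mul_exp_le {a A k : ℝ} (ha : 0 < a) (hA : 0 < A) (hk : 0 < k) (x : ℝ) :
    a * x - A * exp (k * x) ≤ a / k * (log (a / (A * k)) - 1) := by
  have hpos : 0 < a / (A * k) := by positivity
  -- tangent line of `exp` at the maximiser `x = log (a / (A k)) / k`
  have h := add_one_le_exp (k * x - log (a / (A * k)))
  rw [exp_sub, exp_log hpos] at h
  have key : a * x - A * exp (k * x) - a / k * (log (a / (A * k)) - 1)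
      = a / k * ((k * x - log (a / (A * k)) + 1) - exp (k * x) / (a / (A * k))) := by
    field_simp
    ring
  have : a / k * ((k * x - log (a / (A * k)) + 1) - exp (k * x) / (a / (A * k))) ≤ 0 :=
    mul_nonpos_of_nonneg_of_nonpos (by positivity) (by linarith)
  linarith

theorem mul_log_sub_mul_le_of_log_growth {ℓ τ k s R r V : ℝ} (hℓ : 0 < ℓ) (hτ : 0 < τ)
    (hk : 0 < k) (hs : 0 < s) (hV : 0 < V) (hgrowth : k * (log r - log R) ≤ log V - log s) :
    ℓ * log r - τ * V ≤ ℓ * log R + ℓ / k * (log (ℓ / (τ * s * k)) - 1) := by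
  have hsV : s * exp (k * (log r - log R)) ≤ V := by
    calc s * exp (k * (log r - log R)) = exp (log s + k * (log r - log R)) := by
          rw [exp_add, exp_log hs]
      _ ≤ exp (log V) := exp_le_exp.2 (by linarith)
      _ = V := exp_log hV
  calc ℓ * log r - τ * V
      ≤ ℓ * log R + (ℓ * (log r - log R) - τ * s * exp (k * (log r - log R))) := by nlinarith
    _ ≤ ℓ * log R + ℓ / k * (log (ℓ / (τ * s * k)) - 1) := by
        gcongr
        exact mul_sub_mul_exp_le hℓ (by positivity) hk _

theorem exists_forall_sub_bounds_of_tendsto_deriv {f : ℝ → ℝ} {L : ℝ} (hf : Differentiable ℝ f)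
    (hf' : Tendsto (deriv f) atTop (𝓝 L)) {ε : ℝ} (hε : 0 < ε) :
    ∃ u₀, ∀ v u, u₀ ≤ v → v ≤ u →
      (L - ε) * (u - v) ≤ f u - f v ∧ f u - f v ≤ (L + ε) * (u - v) := by
  obtain ⟨u₀, hu₀⟩ := eventually_atTop.1
    (hf'.eventually (Ioo_mem_nhds (sub_lt_self L hε) (lt_add_of_pos_right L hε)))
  refine ⟨u₀, fun v u hv hvu => ⟨?_, ?_⟩⟩
  · exact (convex_Ici u₀).mul_sub_le_image_sub_of_le_deriv hf.continuous.continuousOn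
      hf.differentiableOn (fun x hx => (hu₀ x (interior_subset hx)).1.le) v hv u (hv.trans hvu) hvu
  · exact (convex_Ici u₀).image_sub_le_mul_sub_of_deriv_le hf.continuous.continuousOn
      hf.differentiableOn (fun x hx => (hu₀ x (interior_subset hx)).2.le) v hv u (hv.trans hvu) hvu

section ProximateOrder

variable {ρ : ℝ → ℝ} {ρ₀ : ℝ}

theorem hasDerivAt_comp_exp_mul_self (hdiff : Differentiable ℝ ρ) (u : ℝ) :
    HasDerivAt (fun u => ρ (exp u) * u) (deriv ρ (exp u) * exp u * u + ρ (exp u)) u := by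
  simpa using ((hdiff (exp u)).hasDerivAt.comp u (hasDerivAt_exp u)).fun_mul (hasDerivAt_id' u)

theorem tendsto_deriv_comp_exp_mul_self (hdiff : Differentiable ℝ ρ)
    (hlim : Tendsto ρ atTop (𝓝 ρ₀))
    (hder : Tendsto (fun r => deriv ρ r * r * log r) atTop (𝓝 0)) :
    Tendsto (deriv fun u => ρ (exp u) * u) atTop (𝓝 ρ₀) := by
  have h := (hder.add hlim).comp tendsto_exp_atTop
  rw [zero_add] at h
  refine h.congr fun u => ?_
  simp [(hasDerivAt_comp_exp_mul_self hdiff u).deriv]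

theorem exists_log_rpow_sub_bounds (hdiff : Differentiable ℝ ρ)
    (hlim : Tendsto ρ atTop (𝓝 ρ₀))
    (hder : Tendsto (fun r => deriv ρ r * r * log r) atTop (𝓝 0)) {ε : ℝ} (hε : 0 < ε) :
    ∃ R₀ > 0, ∀ R r, R₀ ≤ R → R ≤ r →
      (ρ₀ - ε) * (log r - log R) ≤ log (r ^ ρ r) - log (R ^ ρ R) ∧
        log (r ^ ρ r) - log (R ^ ρ R) ≤ (ρ₀ + ε) * (log r - log R) := by
  have hL : Differentiable ℝ fun u => ρ (exp u) * u :=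
    fun u => (hasDerivAt_comp_exp_mul_self hdiff u).differentiableAt
  obtain ⟨u₀, hu₀⟩ := exists_forall_sub_bounds_of_tendsto_deriv hL
    (tendsto_deriv_comp_exp_mul_self hdiff hlim hder) hε
  refine ⟨exp u₀, exp_pos u₀, fun R r hR hRr => ?_⟩
  have hRpos : 0 < R := (exp_pos u₀).trans_le hR
  have h := hu₀ (log R) (log r) (le_log_iff_exp_le hRpos |>.2 hR)
    (log_le_log hRpos hRr)
  rwa [exp_log hRpos, exp_log (hRpos.trans_le hRr), ← log_rpow hRpos,
    ← log_rpow (hRpos.trans_le hRr)] at h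

theorem exists_pos_div_sub_lt_neg (hρ₀ : 0 < ρ₀) {τ B q : ℝ}
    (hB : B < (1 + log τ + log ρ₀) / ρ₀) :
    ∃ ε, 0 < ε ∧ ε < ρ₀ ∧
      ((ρ₀ + ε) * q - log τ - log (ρ₀ - ε) - 1) / (ρ₀ - ε) - q < -B := by
  have hcont : ContinuousAt
      (fun ε => ((ρ₀ + ε) * q - log τ - log (ρ₀ - ε) - 1) / (ρ₀ - ε) - q) 0 := by
    have : ρ₀ - 0 ≠ 0 := by simpa using hρ₀.ne'
    fun_prop (disch := assumption)
  have h0 : ((ρ₀ + 0) * q - log τ - log (ρ₀ - 0) - 1) / (ρ₀ - 0) - q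
      = -((1 + log τ + log ρ₀) / ρ₀) := by
    rw [add_zero, sub_zero]
    field_simp
    ring
  have hev := hcont.eventually (gt_mem_nhds (h0.trans_lt (neg_lt_neg hB)))
  obtain ⟨ε, ⟨hεG, hερ⟩, hε⟩ := ((hev.and (gt_mem_nhds hρ₀)).filter_mono
    nhdsWithin_le_nhds |>.and (self_mem_nhdsWithin (s := Set.Ioi 0))).exists
  exact ⟨ε, hε, hερ, hεG⟩

theorem eventually_mul_log_sub_le (hρ₀ : 0 < ρ₀) (hdiff : Differentiable ℝ ρ)
    (hlim : Tendsto ρ atTop (𝓝 ρ₀))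
    (hder : Tendsto (fun r => deriv ρ r * r * log r) atTop (𝓝 0))
    (hmono : StrictMonoOn (fun r => r ^ ρ r) (Set.Ioi 0))
    {φ : ℝ → ℝ} (hφpos : ∀ t, 0 < t → 0 < φ t) (hφp : ∀ t, 0 < t → φ t ^ ρ (φ t) = t)
    {τ B : ℝ} (hτ : 0 < τ) (hB : B < (1 + log τ + log ρ₀) / ρ₀) :
    ∀ᶠ ℓ : ℝ in atTop, ∀ r > 0, ℓ * log r - τ * r ^ ρ r ≤ ℓ * (log (φ ℓ) - B) := by
  set q := max B 0
  obtain ⟨ε, hε, hερ, hgap⟩ := exists_pos_div_sub_lt_neg (q := q) hρ₀ hB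
  obtain ⟨R₀, hR₀, hgrowth⟩ := exists_log_rpow_sub_bounds hdiff hlim hder hε
  have hφle : ∀ R t, 0 < R → 0 < t → R ^ ρ R ≤ t → R ≤ φ t := fun R t hR ht h =>
    (hmono.le_iff_le hR (hφpos t ht)).1 (by simpa only [hφp t ht] using h)
  -- compare with the radius `φ (c ℓ)`, where the factor `c` pushes `log φ` down by at least `q`
  set c := exp (-((ρ₀ + ε) * q))
  have hc1 : c ≤ 1 :=
    exp_le_one_iff.2 (neg_nonpos.2 (mul_nonneg (by linarith) (le_max_right B 0)))
  filter_upwards [eventually_ge_atTop (R₀ ^ ρ R₀ / c), eventually_gt_atTop 0] with ℓ hℓ hℓpos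
    r hr
  set s := c * ℓ
  have hs : 0 < s := by positivity
  have hR₀s : R₀ ^ ρ R₀ ≤ s := by rwa [div_le_iff₀' (exp_pos _)] at hℓ
  set R := φ s
  have hR : 0 < R := hφpos s hs
  have hR₀R : R₀ ≤ R := hφle R₀ s hR₀ hs hR₀s
  have hRφ : R ≤ φ ℓ :=
    hφle R ℓ hR hℓpos (by rw [hφp s hs]; exact mul_le_of_le_one_left hℓpos.le hc1)
  have hlogVφ : ∀ t, 0 < t → log (φ t ^ ρ (φ t)) = log t := fun t ht => by rw [hφp t ht]
  have hq : q ≤ log (φ ℓ) - log R := by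
    have h := (hgrowth R (φ ℓ) hR₀R hRφ).2
    rw [hlogVφ ℓ hℓpos, hlogVφ s hs, log_mul (exp_pos _).ne' hℓpos.ne', log_exp] at h
    exact le_of_mul_le_mul_left (by linarith) (by linarith : 0 < ρ₀ + ε)
  rcases le_total r R with hrR | hRr
  · calc ℓ * log r - τ * r ^ ρ r ≤ ℓ * log R := by
          nlinarith [log_le_log hr hrR, rpow_pos_of_pos hr (ρ r)]
      _ ≤ ℓ * (log (φ ℓ) - B) :=
          mul_le_mul_of_nonneg_left (by linarith [le_max_left B 0]) hℓpos.le
  · have hlog : log (ℓ / (τ * s * (ρ₀ - ε))) = (ρ₀ + ε) * q - log τ - log (ρ₀ - ε) := by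
      rw [log_div hℓpos.ne' (by positivity), log_mul (by positivity) (by linarith),
        log_mul hτ.ne' hs.ne', log_mul (exp_pos _).ne' hℓpos.ne', log_exp]
      ring
    have hV := (hgrowth R r hR₀R hRr).1
    rw [hlogVφ s hs] at hV
    calc ℓ * log r - τ * r ^ ρ r
        ≤ ℓ * log R + ℓ / (ρ₀ - ε) * (log (ℓ / (τ * s * (ρ₀ - ε))) - 1) :=
          mul_log_sub_mul_le_of_log_growth hℓpos hτ (by linarith) hs (rpow_pos_of_pos hr _) hV
      _ = ℓ * (log R + (((ρ₀ + ε) * q - log τ - log (ρ₀ - ε) - 1) / (ρ₀ - ε))) := by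
          rw [hlog]
          ring
      _ ≤ ℓ * (log (φ ℓ) - B) := by gcongr; linarith

end ProximateOrder

theorem stmt_12_general (ρ : ℝ → ℝ) (ρ₀ : ℝ) (hρ₀ : 0 < ρ₀)
    (hdiff : Differentiable ℝ ρ)
    (hlim : Filter.Tendsto ρ Filter.atTop (nhds ρ₀))
    (hder : Filter.Tendsto (fun r => deriv ρ r * r * Real.log r) Filter.atTop (nhds 0))
    (hmono : StrictMonoOn (fun r => r ^ ρ r) (Set.Ioi (0:ℝ)))
    (φ : ℝ → ℝ) (hφpos : ∀ t, 0 < t → 0 < φ t)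
    (hφp : ∀ t, 0 < t → (φ t) ^ ρ (φ t) = t)
    (a : ℕ → ℂ) (σ : ℝ) (hσ : 0 ≤ σ)
    (hyp : Filter.limsup (fun ℓ : ℕ =>
        if a ℓ = 0 then (⊥ : EReal)
        else (((1 / (ℓ : ℝ)) * Real.log (‖a ℓ‖) + Real.log (φ (ℓ : ℝ)) : ℝ) : EReal))
        Filter.atTop ≤
      (if σ = 0 then (⊥ : EReal) else (((1 / ρ₀) * Real.log σ : ℝ) : EReal))
        + ((1 / ρ₀ : ℝ) : EReal) + ((Real.log ρ₀ / ρ₀ : ℝ) : EReal)) :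
    ∀ τ' > σ, ∃ (N : ℕ) (C : ℝ), 0 < C ∧ ∀ r > (0:ℝ), ∀ ℓ : ℕ, N ≤ ℓ → a ℓ ≠ 0 →
      Real.log (‖a ℓ‖) + (ℓ : ℝ) * Real.log r ≤ τ' * r ^ ρ r + C := by
  intro τ' hτ'
  -- the critical constant of the midpoint of `σ` and `τ'`, strictly between theirs
  set B := (log ((σ + τ') / 2) + 1 + log ρ₀) / ρ₀
  have hσB : (if σ = 0 then (⊥ : EReal) else (((1 / ρ₀) * log σ : ℝ) : EReal))
      + ((1 / ρ₀ : ℝ) : EReal) + ((log ρ₀ / ρ₀ : ℝ) : EReal) < (B : EReal) := by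
    split_ifs with h
    · simp
    · rw [← EReal.coe_add, ← EReal.coe_add, EReal.coe_lt_coe_iff]
      have := log_lt_log (lt_of_le_of_ne hσ (Ne.symm h)) (show σ < (σ + τ') / 2 by linarith)
      rw [one_div_mul_eq_div, ← add_div, ← add_div, div_lt_div_iff_of_pos_right hρ₀]
      linarith
  have hBτ : B < (1 + log τ' + log ρ₀) / ρ₀ := by
    have := log_lt_log (by linarith) (show (σ + τ') / 2 < τ' by linarith)
    rw [div_lt_div_iff_of_pos_right hρ₀]
    linarith
  have hcoeff := eventually_lt_of_limsup_lt (hyp.trans_lt hσB)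
  have hgrowth := tendsto_natCast_atTop_atTop.eventually
    (eventually_mul_log_sub_le hρ₀ hdiff hlim hder hmono hφpos hφp (hσ.trans_lt hτ') hBτ)
  obtain ⟨N, hN⟩ := eventually_atTop.1 ((hcoeff.and hgrowth).and (eventually_gt_atTop 0))
  refine ⟨N, 1, one_pos, fun r hr ℓ hℓ ha => ?_⟩
  obtain ⟨⟨hℓB, hℓV⟩, hℓpos⟩ := hN ℓ hℓ
  rw [if_neg ha, EReal.coe_lt_coe_iff] at hℓB
  rw [one_div, inv_mul_eq_div, ← lt_sub_iff_add_lt, div_lt_iff₀ (Nat.cast_pos.2 hℓpos)] at hℓB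
  linarith [hℓV r hr]

/-- Lemma 3.8: from a limsup bound on the coefficients (with the convention
ln 0 = −∞, encoded in EReal) one gets a uniform bound on ln|a_ℓ| + ℓ ln r. -/
theorem stmt_12 (ρ : ℝ → ℝ) (ρ₀ : ℝ) (hρ₀ : 0 < ρ₀)
    (hdiff : Differentiable ℝ ρ)
    (hpos : ∀ r, 0 ≤ r → 0 ≤ ρ r)
    (hlim : Filter.Tendsto ρ Filter.atTop (nhds ρ₀))
    (hder : Filter.Tendsto (fun r => deriv ρ r * r * Real.log r) Filter.atTop (nhds 0))
    (hmono : StrictMonoOn (fun r => r ^ ρ r) (Set.Ioi (0:ℝ)))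
    (hzero : Filter.Tendsto (fun r => r ^ ρ r) (nhdsWithin 0 (Set.Ioi 0)) (nhds 0))
    (φ : ℝ → ℝ) (hφpos : ∀ t, 0 < t → 0 < φ t)
    (hφ : ∀ r, 0 < r → φ (r ^ ρ r) = r)
    (hφp : ∀ t, 0 < t → (φ t) ^ ρ (φ t) = t)
    (a : ℕ → ℂ) (σ : ℝ) (hσ : 0 ≤ σ)
    (hyp : Filter.limsup (fun ℓ : ℕ =>
        if a ℓ = 0 then (⊥ : EReal)
        else (((1 / (ℓ : ℝ)) * Real.log (‖a ℓ‖) + Real.log (φ (ℓ : ℝ)) : ℝ) : EReal))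
        Filter.atTop ≤
      (if σ = 0 then (⊥ : EReal) else (((1 / ρ₀) * Real.log σ : ℝ) : EReal))
        + ((1 / ρ₀ : ℝ) : EReal) + ((Real.log ρ₀ / ρ₀ : ℝ) : EReal)) :
    ∀ τ' > σ, ∃ (N : ℕ) (C : ℝ), 0 < C ∧ ∀ r > (0:ℝ), ∀ ℓ : ℕ, N ≤ ℓ → a ℓ ≠ 0 →
      Real.log (‖a ℓ‖) + (ℓ : ℝ) * Real.log r ≤ τ' * r ^ ρ r + C :=
  stmt_12_general ρ ρ₀ hρ₀ hdiff hlim hder hmono φ hφpos hφp a σ hσ hyp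
end

section
/- Let ρ be a normalized proximate order function with limit ρ₀ > 0 and let f be an entire function on ℂ with supremum norm M(r,f) = sup_{|z| ≤ r}|f(z)|. If ‖f‖_{ρ,σ} := sup_{z ∈ ℂ} |f(z)|·exp(−σ·|z|^{ρ(|z|)}) < ∞ for some σ > 0, then there exists a constant k > 0 depending only on ρ₀, and for each σ a constant C(σ) > 0, such that for every ℓ ∈ ℕ₀: (1/ℓ!)·‖f^{(ℓ)}‖_{ρ, k·σ} ≤ C(σ)·‖f‖_{ρ,σ}·(2kσ)^{ℓ/ρ₀} / G_ℓ, where G_ℓ = φ(ℓ)^ℓ/(e·ρ₀)^{ℓ/ρ₀} and φ is the inverse of r ↦ r^{ρ(r)}. -/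
/-!
Write `V r = r ^ ρ r`. Since `u ↦ log V (eᵘ) = ρ (eᵘ) u` has derivative
`ρ' (eᵘ) eᵘ u + ρ (eᵘ) → ρ₀`, the mean value theorem gives `V (2s) ≤ K V s + A` for a constant
`K = 2 ^ (ρ₀ + 1)`, and `φ (σ t) ≤ 2 σ ^ (1 / ρ₀) φ t` for large `t`. Cauchy's estimate on the
circle of radius `r = φ (ℓ / σ)` about `z` bounds `|f⁽ˡ⁾ z| / ℓ!` by `M exp (σ max V) / r ^ ℓ`,
the maximum of `V` on that circle being at most `K (V |z| + ℓ / σ) + A`. The weight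
`exp (-k σ V |z|)` absorbs the `V |z|` term once `k ≥ K`, leaving `(e ^ K / φ (ℓ / σ)) ^ ℓ`; the
second growth estimate bounds this, for all large `ℓ`, by `(2 e ^ K σ ^ (1 / ρ₀) / φ ℓ) ^ ℓ`,
which is at most `(2 k σ) ^ (ℓ / ρ₀) / G ℓ` once `k ≥ (2 e ^ K) ^ ρ₀ / (2 e ρ₀)`.
-/

open Filter Topology Real Metric

lemma eventually_abs_sub_sub_mul_le_of_tendsto_deriv {g g' : ℝ → ℝ} {L ε : ℝ}
    (hg : ∀ x, HasDerivAt g (g' x) x) (hg' : Tendsto g' atTop (𝓝 L)) (hε : 0 < ε) (c : ℝ) :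
    ∀ᶠ x in atTop, |g (x + c) - g x - L * c| ≤ ε * |c| := by
  obtain ⟨S, hS⟩ := eventually_atTop.1 (Metric.tendsto_nhds.1 hg' ε hε)
  filter_upwards [eventually_ge_atTop (S + |c|)] with x hx
  have hmvt := (convex_Ici S).norm_image_sub_le_of_norm_hasDerivWithin_le
    (f := fun u => g u - u * L) (f' := fun u => g' u - L)
    (fun u _ => ((hg u).sub (hasDerivAt_mul_const L)).hasDerivWithinAt)
    (fun u hu => (hS u hu).le) (x := x) (y := x + c)
    (Set.mem_Ici.2 (by linarith [abs_nonneg c])) (Set.mem_Ici.2 (by linarith [neg_abs_le c]))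
  simp only [Real.norm_eq_abs, add_sub_cancel_left] at hmvt
  convert hmvt using 2
  ring

lemma exists_pos_forall_le_mul_of_eventually_le {a b : ℕ → ℝ} (hb : ∀ n, 0 < b n)
    (h : ∀ᶠ n in atTop, a n ≤ b n) : ∃ C > 0, ∀ n, a n ≤ C * b n := by
  obtain ⟨C, hC⟩ := (isBoundedUnder_of_eventually_le (a := 1)
    (h.mono fun n hn => (div_le_one (hb n)).2 hn)).bddAbove_range
  refine ⟨max C 1, by positivity, fun n => ?_⟩
  rw [← div_le_iff₀ (hb n)]
  exact (hC ⟨n, rfl⟩).trans (le_max_left _ _)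

lemma rpow_div_div_rpow_eq {x y u p : ℝ} (hx : 0 ≤ x) (hy : 0 ≤ y) (n : ℕ) :
    x ^ ((n : ℝ) / p) / (u ^ n / y ^ ((n : ℝ) / p)) = ((x * y) ^ (1 / p) / u) ^ n := by
  rw [div_pow, ← rpow_mul_natCast (by positivity), mul_rpow hx hy, div_div_eq_mul_div,
    one_div_mul_eq_div]

lemma mul_two_mul_rpow_le_rpow {B k σ p : ℝ} (hp : 0 < p) (hB : 0 ≤ B) (hσ : 0 ≤ σ)
    (hk : (2 * B) ^ p / (2 * exp 1 * p) ≤ k) :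
    B * (2 * σ ^ (1 / p)) ≤ (2 * k * σ * (exp 1 * p)) ^ (1 / p) := by
  have hBp : (2 * B) ^ p ≤ 2 * k * (exp 1 * p) := by
    rw [div_le_iff₀ (by positivity)] at hk
    linarith
  calc B * (2 * σ ^ (1 / p)) = ((2 * B) ^ p * σ) ^ (1 / p) := by
        rw [mul_rpow (by positivity) hσ, ← rpow_mul (by positivity), mul_one_div_cancel hp.ne',
          rpow_one]
        ring
    _ ≤ _ := by
      have hk0 : 0 ≤ k := le_trans (by positivity) hk
      exact rpow_le_rpow (by positivity) (by linarith [mul_le_mul_of_nonneg_right hBp hσ])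
        (by positivity)

section WeightedCauchy

variable {E : Type*} [SeminormedAddCommGroup E] {V : ℝ → ℝ} {K A : ℝ}

lemma apply_norm_le_of_dist_le (hK : 0 ≤ K) (hV₀ : ∀ s, 0 ≤ s → 0 ≤ V s)
    (hV : ∀ s > 0, ∀ a, 0 ≤ a → a ≤ 2 * s → V a ≤ K * V s + A) {r : ℝ} (hr : 0 < r) {w z : E}
    (hwz : dist w z ≤ r) : V ‖w‖ ≤ K * (V ‖z‖ + V r) + A := by
  have hw : ‖w‖ ≤ 2 * max ‖z‖ r := by
    have := norm_le_insert' w z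
    rw [← dist_eq_norm] at this
    linarith [le_max_left ‖z‖ r, le_max_right ‖z‖ r]
  have hmax : V (max ‖z‖ r) ≤ V ‖z‖ + V r := by
    rcases max_choice ‖z‖ r with h | h <;> rw [h] <;>
      linarith [hV₀ ‖z‖ (norm_nonneg z), hV₀ r hr.le]
  calc V ‖w‖ ≤ K * V (max ‖z‖ r) + A := hV _ (lt_max_of_lt_right hr) _ (norm_nonneg w) hw
    _ ≤ K * (V ‖z‖ + V r) + A := by gcongr

lemma norm_iteratedDeriv_div_factorial_mul_exp_le (hK : 0 ≤ K) (hV₀ : ∀ s, 0 ≤ s → 0 ≤ V s)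
    (hV : ∀ s > 0, ∀ a, 0 ≤ a → a ≤ 2 * s → V a ≤ K * V s + A) {σ k M r : ℝ} (hσ : 0 < σ)
    (hKk : K ≤ k) {f : ℂ → ℂ} (hf : Differentiable ℂ f)
    (hfM : ∀ w, ‖f w‖ ≤ M * exp (σ * V ‖w‖)) (hr : 0 < r) {ℓ : ℕ} (hVr : V r = ℓ / σ) (z : ℂ) :
    ‖iteratedDeriv ℓ f z‖ / ℓ.factorial * exp (-(k * σ) * V ‖z‖) ≤
      M * exp (σ * A) * (exp K / r) ^ ℓ := by
  have hM : 0 ≤ M := nonneg_of_mul_nonneg_left ((norm_nonneg _).trans (hfM z)) (exp_pos _)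
  have hcauchy := Complex.norm_iteratedDeriv_le_of_forall_mem_sphere_norm_le (c := z) ℓ hr
    hf.diffContOnCl fun w hw => (hfM w).trans (mul_le_mul_of_nonneg_left (exp_le_exp.2
      (mul_le_mul_of_nonneg_left (apply_norm_le_of_dist_le hK hV₀ hV hr (mem_sphere.1 hw).le)
        hσ.le)) hM)
  have hexp : exp (σ * (K * (V ‖z‖ + V r) + A)) * exp (-(k * σ) * V ‖z‖) ≤
      exp (σ * A) * exp K ^ ℓ := by
    rw [← exp_add, ← exp_nat_mul, ← exp_add, hVr]
    refine exp_le_exp.2 ?_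
    field_simp
    nlinarith [mul_nonneg (mul_nonneg (sub_nonneg.2 hKk) hσ.le) (hV₀ ‖z‖ (norm_nonneg z))]
  calc ‖iteratedDeriv ℓ f z‖ / ℓ.factorial * exp (-(k * σ) * V ‖z‖)
      ≤ M * exp (σ * (K * (V ‖z‖ + V r) + A)) / r ^ ℓ * exp (-(k * σ) * V ‖z‖) :=
        mul_le_mul_of_nonneg_right
          ((div_le_iff₀ (by positivity)).2 (hcauchy.trans_eq (by ring))) (exp_pos _).le
    _ ≤ M * (exp (σ * A) * exp K ^ ℓ) / r ^ ℓ := by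
      rw [div_mul_eq_mul_div, mul_assoc]
      gcongr
    _ = M * exp (σ * A) * (exp K / r) ^ ℓ := by ring

lemma norm_mul_exp_neg_le {F : Type*} [SeminormedAddCommGroup F] {σ k M : ℝ}
    (hV₀ : ∀ s, 0 ≤ s → 0 ≤ V s) (hσ : 0 ≤ σ) (hk : 1 ≤ k) {f : E → F}
    (hfM : ∀ w, ‖f w‖ ≤ M * exp (σ * V ‖w‖)) (z : E) :
    ‖f z‖ * exp (-(k * σ) * V ‖z‖) ≤ M := by
  have hM : 0 ≤ M := nonneg_of_mul_nonneg_left ((norm_nonneg _).trans (hfM z)) (exp_pos _)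
  calc ‖f z‖ * exp (-(k * σ) * V ‖z‖) ≤ M * exp (σ * V ‖z‖) * exp (-(k * σ) * V ‖z‖) := by
        gcongr
        exact hfM z
    _ ≤ M := by
      rw [mul_assoc, ← exp_add]
      refine mul_le_of_le_one_right hM (exp_le_one_iff.2 ?_)
      nlinarith [mul_nonneg (mul_nonneg (sub_nonneg.2 hk) hσ) (hV₀ ‖z‖ (norm_nonneg z))]

end WeightedCauchy

section ProximateOrder

variable {ρ : ℝ → ℝ} {ρ₀ : ℝ}

lemma rpow_self_exp (x : ℝ) : exp x ^ ρ (exp x) = exp (ρ (exp x) * x) := by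
  rw [rpow_def_of_pos (exp_pos x), log_exp, mul_comm]

lemma eventually_abs_rho_exp_add_mul_sub_le (hdiff : Differentiable ℝ ρ)
    (hlim : Tendsto ρ atTop (𝓝 ρ₀))
    (hder : Tendsto (fun r => deriv ρ r * r * log r) atTop (𝓝 0)) {ε : ℝ} (hε : 0 < ε) (c : ℝ) :
    ∀ᶠ x in atTop, |ρ (exp (x + c)) * (x + c) - ρ (exp x) * x - ρ₀ * c| ≤ ε * |c| := by
  refine eventually_abs_sub_sub_mul_le_of_tendsto_deriv (g := fun u => ρ (exp u) * u)
    (fun u => (((hdiff _).hasDerivAt.comp u (hasDerivAt_exp u)).mul (hasDerivAt_id' u))) ?_ hε c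
  simpa [Function.comp_def] using (hder.comp tendsto_exp_atTop).add (hlim.comp tendsto_exp_atTop)

lemma exists_rpow_self_le_mul_add (hdiff : Differentiable ℝ ρ) (hlim : Tendsto ρ atTop (𝓝 ρ₀))
    (hder : Tendsto (fun r => deriv ρ r * r * log r) atTop (𝓝 0))
    (hmono : StrictMonoOn (fun r => r ^ ρ r) (Set.Ioi 0)) :
    ∃ K A : ℝ, 0 ≤ K ∧ 0 ≤ A ∧ ∀ s > 0, ∀ a, 0 ≤ a → a ≤ 2 * s → a ^ ρ a ≤ K * s ^ ρ s + A := by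
  obtain ⟨x₀, hx₀⟩ :=
    eventually_atTop.1 (eventually_abs_rho_exp_add_mul_sub_le hdiff hlim hder one_pos (log 2))
  refine ⟨2 ^ (ρ₀ + 1), (2 * exp x₀) ^ ρ (2 * exp x₀) + 1, by positivity, by positivity,
    fun s hs a ha has => ?_⟩
  have hKs : 0 ≤ 2 ^ (ρ₀ + 1) * s ^ ρ s := by positivity
  have hA : 0 ≤ (2 * exp x₀) ^ ρ (2 * exp x₀) := by positivity
  -- `0 ^ ρ 0 = 1` when `ρ 0 = 0`: this is what the `+ 1` in `A` is for.
  rcases ha.eq_or_lt with rfl | ha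
  · linarith [zero_rpow_le_one (ρ 0)]
  have ha2s : a ^ ρ a ≤ (2 * s) ^ ρ (2 * s) :=
    hmono.monotoneOn ha (Set.mem_Ioi.2 (by positivity)) has
  rcases le_or_gt s (exp x₀) with hsx | hsx
  · have := hmono.monotoneOn (Set.mem_Ioi.2 (by positivity)) (Set.mem_Ioi.2 (by positivity))
      (mul_le_mul_of_nonneg_left hsx zero_le_two)
    linarith
  obtain ⟨x, rfl⟩ : ∃ x, s = exp x := ⟨log s, (exp_log hs).symm⟩
  have hx := (abs_le.1 (hx₀ x (exp_lt_exp.1 hsx).le)).2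
  rw [abs_of_pos (log_pos one_lt_two)] at hx
  have h2 : 2 * exp x = exp (x + log 2) := by rw [exp_add, exp_log two_pos, mul_comm]
  calc a ^ ρ a ≤ exp (x + log 2) ^ ρ (exp (x + log 2)) := h2 ▸ ha2s
    _ = exp (ρ (exp (x + log 2)) * (x + log 2)) := rpow_self_exp _
    _ ≤ exp (log 2 * (ρ₀ + 1) + ρ (exp x) * x) := exp_le_exp.2 (by linarith)
    _ = 2 ^ (ρ₀ + 1) * exp x ^ ρ (exp x) := by
      rw [rpow_self_exp, exp_add, rpow_def_of_pos two_pos]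
    _ ≤ _ := by linarith

lemma tendsto_atTop_of_rpow_self_apply (hmono : StrictMonoOn (fun r => r ^ ρ r) (Set.Ioi 0))
    {φ : ℝ → ℝ} (hφpos : ∀ t, 0 < t → 0 < φ t) (hφp : ∀ t, 0 < t → φ t ^ ρ (φ t) = t) :
    Tendsto φ atTop atTop := by
  refine tendsto_atTop.2 fun R => ?_
  filter_upwards [eventually_gt_atTop (max R 1 ^ ρ (max R 1)), eventually_gt_atTop 0]
    with t ht ht0
  by_contra! h
  have := hmono.monotoneOn (hφpos t ht0) (lt_max_of_lt_right one_pos : (0 : ℝ) < max R 1)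
    (h.le.trans (le_max_left _ _))
  simp only [hφp t ht0] at this
  linarith

lemma eventually_le_two_mul_rpow_mul (hρ₀ : 0 < ρ₀) (hdiff : Differentiable ℝ ρ)
    (hlim : Tendsto ρ atTop (𝓝 ρ₀))
    (hder : Tendsto (fun r => deriv ρ r * r * log r) atTop (𝓝 0))
    (hmono : StrictMonoOn (fun r => r ^ ρ r) (Set.Ioi 0))
    {φ : ℝ → ℝ} (hφpos : ∀ t, 0 < t → 0 < φ t) (hφp : ∀ t, 0 < t → φ t ^ ρ (φ t) = t)
    {a : ℝ} (ha : 0 < a) :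
    ∀ᶠ t in atTop, φ (a * t) ≤ 2 * a ^ (1 / ρ₀) * φ t := by
  set c := log (2 * a ^ (1 / ρ₀)) with hc_def
  have hc : ρ₀ * c = ρ₀ * log 2 + log a := by
    rw [hc_def, log_mul two_ne_zero (by positivity), log_rpow ha]
    field_simp
  have hlog2 := log_pos one_lt_two
  -- With this `ε` the error `ε |c|` is at most `ρ₀ log 2`, leaving `V (eᶜ r) ≥ a V r`.
  have hε : 0 < ρ₀ * log 2 / (|c| + 1) := by positivity
  have hεc : ρ₀ * log 2 / (|c| + 1) * |c| ≤ ρ₀ * log 2 := by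
    rw [div_mul_eq_mul_div, div_le_iff₀ (by positivity)]
    nlinarith [abs_nonneg c]
  filter_upwards [(tendsto_log_atTop.comp
    (tendsto_atTop_of_rpow_self_apply hmono hφpos hφp)).eventually
    (eventually_abs_rho_exp_add_mul_sub_le hdiff hlim hder hε c), eventually_gt_atTop 0]
    with t ht ht0
  simp only [Function.comp_apply] at ht
  have hφt : exp (log (φ t)) = φ t := exp_log (hφpos t ht0)
  set x := log (φ t)
  have hkey : log a + ρ (exp x) * x ≤ ρ (exp (x + c)) * (x + c) := by
    linarith [(abs_le.1 ht).1]
  have hrhs : 2 * a ^ (1 / ρ₀) * φ t = exp (x + c) := by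
    rw [exp_add, hφt, exp_log (by positivity), mul_comm]
  rw [hrhs, ← hmono.le_iff_le (hφpos _ (by positivity)) (exp_pos _), hφp _ (by positivity),
    rpow_self_exp]
  calc a * t = exp (log a + ρ (exp x) * x) := by
        rw [exp_add, exp_log ha, ← rpow_self_exp, hφt, hφp t ht0]
    _ ≤ _ := exp_le_exp.2 hkey

lemma eventually_div_pow_le_div_pow (hρ₀ : 0 < ρ₀)
    (hdiff : Differentiable ℝ ρ) (hlim : Tendsto ρ atTop (𝓝 ρ₀))
    (hder : Tendsto (fun r => deriv ρ r * r * log r) atTop (𝓝 0))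
    (hmono : StrictMonoOn (fun r => r ^ ρ r) (Set.Ioi 0))
    {φ : ℝ → ℝ} (hφpos : ∀ t, 0 < t → 0 < φ t) (hφp : ∀ t, 0 < t → φ t ^ ρ (φ t) = t)
    {σ B W : ℝ} (hσ : 0 < σ) (hB : 0 ≤ B) (hBW : B * (2 * σ ^ (1 / ρ₀)) ≤ W) :
    ∀ᶠ ℓ : ℕ in atTop, (B / φ (ℓ / σ)) ^ ℓ ≤ (W / φ ℓ) ^ ℓ := by
  filter_upwards [(tendsto_natCast_atTop_atTop.atTop_div_const hσ).eventually
    (eventually_le_two_mul_rpow_mul hρ₀ hdiff hlim hder hmono hφpos hφp hσ),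
    eventually_gt_atTop 0] with ℓ hℓ hℓ0
  rw [mul_div_cancel₀ _ hσ.ne'] at hℓ
  have hℓσ : 0 < φ (ℓ / σ) := hφpos _ (by positivity)
  have hφℓ : 0 < φ ℓ := hφpos _ (by positivity)
  refine pow_le_pow_left₀ (by positivity) ?_ ℓ
  rw [div_le_div_iff₀ hℓσ hφℓ]
  calc B * φ ℓ ≤ B * (2 * σ ^ (1 / ρ₀) * φ (ℓ / σ)) := by gcongr
    _ ≤ W * φ (ℓ / σ) := by rw [← mul_assoc]; gcongr

end ProximateOrder

theorem stmt_13_general (ρ : ℝ → ℝ) (ρ₀ : ℝ) (hρ₀ : 0 < ρ₀)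
    (hdiff : Differentiable ℝ ρ)
    (hlim : Filter.Tendsto ρ Filter.atTop (nhds ρ₀))
    (hder : Filter.Tendsto (fun r => deriv ρ r * r * Real.log r) Filter.atTop (nhds 0))
    (hmono : StrictMonoOn (fun r => r ^ ρ r) (Set.Ioi (0:ℝ)))
    (φ : ℝ → ℝ) (hφpos : ∀ t, 0 < t → 0 < φ t)
    (hφp : ∀ t, 0 < t → (φ t) ^ ρ (φ t) = t)
    (G : ℕ → ℝ) (hG0 : G 0 = 1)
    (hG : ∀ ℓ : ℕ, 0 < ℓ → G ℓ = φ (ℓ : ℝ) ^ ℓ / (Real.exp 1 * ρ₀) ^ ((ℓ : ℝ) / ρ₀)) :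
    ∃ k > (0:ℝ), ∀ σ > (0:ℝ), ∃ C > (0:ℝ), ∀ f : ℂ → ℂ, Differentiable ℂ f →
      ∀ M : ℝ,
        (∀ z : ℂ, ‖f z‖ ≤ M * Real.exp (σ * ‖z‖ ^ ρ (‖z‖))) →
        ∀ ℓ : ℕ, ∀ z : ℂ,
          ‖iteratedDeriv ℓ f z‖ / (ℓ.factorial : ℝ)
              * Real.exp (-(k * σ) * ‖z‖ ^ ρ (‖z‖)) ≤
            C * M * (2 * k * σ) ^ ((ℓ : ℝ) / ρ₀) / G ℓ := by
  obtain ⟨K, A, hK, hA, hV⟩ := exists_rpow_self_le_mul_add hdiff hlim hder hmono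
  have hV₀ : ∀ s : ℝ, 0 ≤ s → 0 ≤ s ^ ρ s := fun s hs => rpow_nonneg hs _
  set k := max (max 1 K) ((2 * exp K) ^ ρ₀ / (2 * exp 1 * ρ₀))
  have hKk : K ≤ k := (le_max_right 1 K).trans (le_max_left _ _)
  have hk1 : 1 ≤ k := (le_max_left 1 K).trans (le_max_left _ _)
  refine ⟨k, by positivity, fun σ hσ => ?_⟩
  set W := (2 * k * σ * (exp 1 * ρ₀)) ^ (1 / ρ₀)
  have hW : 0 < W := by positivity
  have hb : ∀ ℓ : ℕ, 0 < (W / φ ℓ) ^ ℓ := by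
    rintro (_ | ℓ)
    · simp
    · exact pow_pos (div_pos hW (hφpos _ (by positivity))) _
  obtain ⟨C, hC, hCφ⟩ := exists_pos_forall_le_mul_of_eventually_le hb
    (eventually_div_pow_le_div_pow hρ₀ hdiff hlim hder hmono hφpos hφp hσ (exp_pos K).le
      (mul_two_mul_rpow_le_rpow hρ₀ (exp_pos K).le hσ.le (le_max_right _ _)))
  refine ⟨exp (σ * A) * max C 1, by positivity, fun f hf M hfM ℓ z => ?_⟩
  have hM : 0 ≤ M := nonneg_of_mul_nonneg_left ((norm_nonneg _).trans (hfM z)) (exp_pos _)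
  rcases ℓ.eq_zero_or_pos with rfl | hℓ
  · simp only [iteratedDeriv_zero, Nat.factorial_zero, Nat.cast_one, div_one, Nat.cast_zero,
      zero_div, rpow_zero, mul_one, hG0]
    exact (norm_mul_exp_neg_le hV₀ hσ.le hk1 hfM z).trans (le_mul_of_one_le_left hM
      (one_le_mul_of_one_le_of_one_le (one_le_exp (by positivity)) (le_max_right _ _)))
  · have hℓσ : 0 < (ℓ : ℝ) / σ := by positivity
    calc _ ≤ M * exp (σ * A) * (exp K / φ (ℓ / σ)) ^ ℓ :=
          norm_iteratedDeriv_div_factorial_mul_exp_le hK hV₀ hV hσ hKk hf hfM (hφpos _ hℓσ)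
            (hφp _ hℓσ) z
      _ ≤ M * exp (σ * A) * (max C 1 * (W / φ ℓ) ^ ℓ) := by
          gcongr
          exact (hCφ ℓ).trans (mul_le_mul_of_nonneg_right (le_max_left C 1) (hb ℓ).le)
      _ = _ := by
          rw [hG ℓ hℓ, mul_div_assoc, rpow_div_div_rpow_eq (by positivity) (by positivity)]
          ring

/-- Lemma 3.12 (complex version): derivative estimates in the proximate-order scale. -/
theorem stmt_13 (ρ : ℝ → ℝ) (ρ₀ : ℝ) (hρ₀ : 0 < ρ₀)
    (hdiff : Differentiable ℝ ρ)
    (hpos : ∀ r, 0 ≤ r → 0 ≤ ρ r)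
    (hlim : Filter.Tendsto ρ Filter.atTop (nhds ρ₀))
    (hder : Filter.Tendsto (fun r => deriv ρ r * r * Real.log r) Filter.atTop (nhds 0))
    (hmono : StrictMonoOn (fun r => r ^ ρ r) (Set.Ioi (0:ℝ)))
    (hzero : Filter.Tendsto (fun r => r ^ ρ r) (nhdsWithin 0 (Set.Ioi 0)) (nhds 0))
    (φ : ℝ → ℝ) (hφpos : ∀ t, 0 < t → 0 < φ t)
    (hφ : ∀ r, 0 < r → φ (r ^ ρ r) = r)
    (hφp : ∀ t, 0 < t → (φ t) ^ ρ (φ t) = t)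
    (G : ℕ → ℝ) (hG0 : G 0 = 1)
    (hG : ∀ ℓ : ℕ, 0 < ℓ → G ℓ = φ (ℓ : ℝ) ^ ℓ / (Real.exp 1 * ρ₀) ^ ((ℓ : ℝ) / ρ₀)) :
    ∃ k > (0:ℝ), ∀ σ > (0:ℝ), ∃ C > (0:ℝ), ∀ f : ℂ → ℂ, Differentiable ℂ f →
      ∀ M : ℝ,
        (∀ z : ℂ, ‖f z‖ ≤ M * Real.exp (σ * ‖z‖ ^ ρ (‖z‖))) →
        ∀ ℓ : ℕ, ∀ z : ℂ,
          ‖iteratedDeriv ℓ f z‖ / (ℓ.factorial : ℝ)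
              * Real.exp (-(k * σ) * ‖z‖ ^ ρ (‖z‖)) ≤
            C * M * (2 * k * σ) ^ ((ℓ : ℝ) / ρ₀) / G ℓ :=
  stmt_13_general ρ ρ₀ hρ₀ hdiff hlim hder hmono φ hφpos hφp G hG0 hG
end

section
/- Let ρ₁, ρ₂ be normalized proximate order functions with limits ρ₁₀, ρ₂₀ > 0 satisfying r^{ρ₁(r)} = O(r^{ρ₂(r)}) as r → ∞, and with ρ₁(r) ≤ ρ₂(r) for all r ≥ 0. Suppose (u_ℓ) are entire functions on ℂ such that for every ε > 0 there exist σ, C > 0 with ‖u_ℓ‖_{ρ₂,σ} ≤ C·(G_{ρ₁,ℓ}/ℓ!)·ε^ℓ for all ℓ. Then for every entire f with ‖f‖_{ρ₁,τ} < ∞ for some τ > 0, the series T f := Σ_{ℓ≥0} u_ℓ·f^{(ℓ)} converges in the norm ‖·‖_{ρ₂, σ + 2^{ρ₁₀+1}τ} for suitable σ, and T defines a continuous linear operator from A_{ρ₁} = ∪_{τ>0} A_{ρ₁,τ} to A_{ρ₂} = ∪_{σ>0} A_{ρ₂,σ}. -/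
/-!
Write `W(r) = r ^ ρ₁(r)`. Cauchy's estimate on the circle of radius `s = φ₁(ℓ)` about `z` gives
`|f⁽ˡ⁾(z)| ≤ ℓ! M exp (τ W(|z| + s)) / s ^ ℓ`; the factor `ℓ!` cancels against the coefficient bound
and `s ^ ℓ` against `G_{ρ₁,ℓ} = s ^ ℓ / q ^ ℓ`, `q = (e ρ₁₀) ^ (1/ρ₁₀)`. Because `ρ₁` is a
proximate order, the mean value theorem on `[m, 2m]` yields `W(2m) ≤ 2 ^ (ρ₁₀+1) W(m) + B`, hence
`W(|z| + s) ≤ 2 ^ (ρ₁₀+1) (W(|z|) + ℓ) + B` as `W(s) = ℓ`. The resulting factor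
`exp (2 ^ (ρ₁₀+1) τ ℓ)` is absorbed by taking `ε = q / (2 exp (2 ^ (ρ₁₀+1) τ))`, so the series is
dominated by a geometric series of ratio `1/2`.
-/

open Filter Real Metric Set Topology

section ProximateOrder

variable {ρ : ℝ → ℝ} {ρ₀ δ : ℝ}

lemma rpow_self_le_one (hmono : StrictMonoOn (fun r => r ^ ρ r) (Ioi 0)) {r : ℝ}
    (hr₀ : 0 ≤ r) (hr₁ : r ≤ 1) : r ^ ρ r ≤ 1 := by
  rcases hr₀.eq_or_lt with rfl | hr₀
  · exact zero_rpow_le_one _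
  · simpa using hmono.monotoneOn hr₀ (mem_Ioi.2 one_pos) hr₁

lemma rpow_self_le_rpow_self_add_one (hmono : StrictMonoOn (fun r => r ^ ρ r) (Ioi 0))
    {a b : ℝ} (ha : 0 ≤ a) (hab : a ≤ b) : a ^ ρ a ≤ b ^ ρ b + 1 := by
  have hb : 0 ≤ b ^ ρ b := rpow_nonneg (ha.trans hab) _
  rcases ha.eq_or_lt with rfl | ha
  · linarith [zero_rpow_le_one (ρ 0)]
  · linarith [hmono.monotoneOn ha (ha.trans_le hab) hab]

lemma rpow_le_rpow_add_one_of_le {ρ₁ ρ₂ : ℝ → ℝ}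
    (hmono₁ : StrictMonoOn (fun r => r ^ ρ₁ r) (Ioi 0)) (hle : ∀ r, 0 ≤ r → ρ₁ r ≤ ρ₂ r)
    {r : ℝ} (hr : 0 ≤ r) : r ^ ρ₁ r ≤ r ^ ρ₂ r + 1 := by
  rcases le_total r 1 with h | h
  · linarith [rpow_self_le_one hmono₁ hr h, rpow_nonneg hr (ρ₂ r)]
  · linarith [rpow_le_rpow_of_exponent_le h (hle r hr)]

lemma eventually_abs_sub_mul_log_le (hdiff : Differentiable ℝ ρ)
    (hder : Tendsto (fun r => deriv ρ r * r * log r) atTop (𝓝 0)) {η : ℝ} (hη : 0 < η) :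
    ∀ᶠ m in atTop, |(ρ (2 * m) - ρ m) * log m| ≤ η := by
  obtain ⟨m₀, hm₀⟩ := eventually_atTop.1 (hder.eventually (closedBall_mem_nhds 0 hη))
  filter_upwards [eventually_ge_atTop (max m₀ 1)] with m hm
  have hm₁ : 1 ≤ m := le_of_max_le_right hm
  obtain ⟨ξ, ⟨hmξ, -⟩, hslope⟩ := exists_deriv_eq_slope ρ (by linarith : m < 2 * m)
    hdiff.continuous.continuousOn hdiff.differentiableOn
  have hdiffρ : ρ (2 * m) - ρ m = deriv ρ ξ * m := by
    rw [hslope]; field_simp; ring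
  have hlog : 0 ≤ log m := log_nonneg hm₁
  have hmono : m * log m ≤ ξ * log ξ :=
    mul_le_mul hmξ.le (log_le_log (by linarith) hmξ.le) hlog (by linarith)
  calc |(ρ (2 * m) - ρ m) * log m| = |deriv ρ ξ| * (m * log m) := by
        rw [hdiffρ, abs_mul, abs_mul, abs_of_nonneg (by linarith : (0 : ℝ) ≤ m), abs_of_nonneg hlog,
          mul_assoc]
    _ ≤ |deriv ρ ξ| * (ξ * log ξ) := by gcongr
    _ = |deriv ρ ξ * ξ * log ξ| := by
        rw [abs_mul, abs_mul, abs_of_nonneg (by linarith : (0 : ℝ) ≤ ξ),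
          abs_of_nonneg (log_nonneg (by linarith)), mul_assoc]
    _ ≤ η := by simpa using hm₀ ξ (by linarith [le_max_left m₀ 1])

lemma eventually_two_mul_rpow_le (hdiff : Differentiable ℝ ρ) (hlim : Tendsto ρ atTop (𝓝 ρ₀))
    (hder : Tendsto (fun r => deriv ρ r * r * log r) atTop (𝓝 0)) (hδ : 0 < δ) :
    ∀ᶠ m in atTop, (2 * m) ^ ρ (2 * m) ≤ 2 ^ (ρ₀ + δ) * m ^ ρ m := by
  have hlog2 : 0 < log 2 := log_pos one_lt_two
  have hρ : ∀ᶠ m in atTop, ρ (2 * m) ≤ ρ₀ + δ / 2 :=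
    (hlim.comp (tendsto_id.const_mul_atTop two_pos)).eventually
      (eventually_le_nhds (by linarith))
  filter_upwards [hρ, eventually_abs_sub_mul_log_le hdiff hder (by positivity : 0 < δ / 2 * log 2),
    eventually_gt_atTop 0] with m h2m hosc hm
  rw [rpow_def_of_pos (by positivity), rpow_def_of_pos two_pos, rpow_def_of_pos hm, ← exp_add,
    exp_le_exp, log_mul two_ne_zero hm.ne']
  linarith [(abs_le.1 hosc).2, mul_le_mul_of_nonneg_left h2m hlog2.le]

lemma exists_two_mul_rpow_le (hmono : StrictMonoOn (fun r => r ^ ρ r) (Ioi 0))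
    (hdiff : Differentiable ℝ ρ) (hlim : Tendsto ρ atTop (𝓝 ρ₀))
    (hder : Tendsto (fun r => deriv ρ r * r * log r) atTop (𝓝 0)) (hδ : 0 < δ) :
    ∃ B, ∀ m, 0 ≤ m → (2 * m) ^ ρ (2 * m) ≤ 2 ^ (ρ₀ + δ) * m ^ ρ m + B := by
  obtain ⟨m₁, hm₁⟩ := eventually_atTop.1 (eventually_two_mul_rpow_le hdiff hlim hder hδ)
  set m₂ := max m₁ 0
  refine ⟨(2 * m₂) ^ ρ (2 * m₂) + 1, fun m hm => ?_⟩
  have h₀ : 0 ≤ 2 ^ (ρ₀ + δ) * m ^ ρ m := by positivity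
  have h₂ : 0 ≤ (2 * m₂) ^ ρ (2 * m₂) := rpow_nonneg (by positivity) _
  rcases le_total m₂ m with h | h
  · linarith [hm₁ m ((le_max_left m₁ 0).trans h)]
  · linarith [rpow_self_le_rpow_self_add_one hmono (by positivity : 0 ≤ 2 * m)
      (by linarith : 2 * m ≤ 2 * m₂)]

lemma exists_rpow_add_le (hmono : StrictMonoOn (fun r => r ^ ρ r) (Ioi 0))
    (hdiff : Differentiable ℝ ρ) (hlim : Tendsto ρ atTop (𝓝 ρ₀))
    (hder : Tendsto (fun r => deriv ρ r * r * log r) atTop (𝓝 0)) (hδ : 0 < δ) :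
    ∃ B, ∀ r s, 0 ≤ r → 0 ≤ s →
      (r + s) ^ ρ (r + s) ≤ 2 ^ (ρ₀ + δ) * (r ^ ρ r + s ^ ρ s) + B := by
  obtain ⟨B, hB⟩ := exists_two_mul_rpow_le hmono hdiff hlim hder hδ
  refine ⟨B + 1, fun r s hr hs => ?_⟩
  have hmax : max r s ^ ρ (max r s) ≤ r ^ ρ r + s ^ ρ s := by
    have := rpow_nonneg hr (ρ r)
    have := rpow_nonneg hs (ρ s)
    rcases max_choice r s with h | h <;> rw [h] <;> linarith
  calc (r + s) ^ ρ (r + s) ≤ (2 * max r s) ^ ρ (2 * max r s) + 1 :=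
        rpow_self_le_rpow_self_add_one hmono (by positivity)
          (by linarith [le_max_left r s, le_max_right r s])
    _ ≤ 2 ^ (ρ₀ + δ) * max r s ^ ρ (max r s) + B + 1 := by
        linarith [hB _ (le_max_of_le_left hr : 0 ≤ max r s)]
    _ ≤ 2 ^ (ρ₀ + δ) * (r ^ ρ r + s ^ ρ s) + (B + 1) := by
        linarith [mul_le_mul_of_nonneg_left hmax (by positivity : (0 : ℝ) ≤ 2 ^ (ρ₀ + δ))]

end ProximateOrder

lemma norm_iteratedDeriv_le_of_norm_le_exp {ρ : ℝ → ℝ}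
    (hmono : StrictMonoOn (fun r => r ^ ρ r) (Ioi 0)) {f : ℂ → ℂ} (hf : Differentiable ℂ f)
    {τ M : ℝ} (hτ : 0 ≤ τ) (hM : 0 ≤ M) (hfM : ∀ z, ‖f z‖ ≤ M * exp (τ * ‖z‖ ^ ρ ‖z‖))
    (z : ℂ) {s : ℝ} (hs : 0 < s) (ℓ : ℕ) :
    ‖iteratedDeriv ℓ f z‖
      ≤ ℓ.factorial * (M * exp (τ * ((‖z‖ + s) ^ ρ (‖z‖ + s) + 1))) / s ^ ℓ := by
  refine Complex.norm_iteratedDeriv_le_of_forall_mem_sphere_norm_le ℓ hs hf.diffContOnCl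
    fun w hw => (hfM w).trans ?_
  have hw : ‖w‖ ≤ ‖z‖ + s := by
    simpa [mem_sphere_iff_norm.1 hw] using norm_le_norm_add_norm_sub' w z
  gcongr M * exp (τ * ?_)
  exact rpow_self_le_rpow_self_add_one hmono (norm_nonneg w) hw

lemma norm_mul_le_of_coeff_bound_of_cauchy_bound {R : Type*} [SeminormedRing R] {a b : R}
    {ℓ : ℕ} {C E N q s ε : ℝ} (hs : 0 < s)
    (ha : ‖a‖ ≤ C * (s ^ ℓ / q ^ ℓ / ℓ.factorial) * ε ^ ℓ * E)
    (hb : ‖b‖ ≤ ℓ.factorial * N / s ^ ℓ) :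
    ‖a * b‖ ≤ C * N * (ε / q) ^ ℓ * E := by
  calc ‖a * b‖ ≤ ‖a‖ * ‖b‖ := norm_mul_le a b
    _ ≤ C * (s ^ ℓ / q ^ ℓ / ℓ.factorial) * ε ^ ℓ * E * (ℓ.factorial * N / s ^ ℓ) :=
        mul_le_mul ha hb (norm_nonneg _) ((norm_nonneg _).trans ha)
    _ = C * N * (ε / q) ^ ℓ * E := by
        field_simp
        ring

lemma exists_pos_rpow_le_and_eq_div_pow {ρ φ : ℝ → ℝ} {ρ₀ : ℝ} (hρ₀ : 0 < ρ₀)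
    (hφpos : ∀ t, 0 < t → 0 < φ t) (hφ : ∀ t, 0 < t → φ t ^ ρ (φ t) = t) {G : ℕ → ℝ}
    (hG0 : G 0 = 1) (hG : ∀ ℓ : ℕ, 0 < ℓ → G ℓ = φ ℓ ^ ℓ / (exp 1 * ρ₀) ^ ((ℓ : ℝ) / ρ₀))
    (ℓ : ℕ) : ∃ s > 0, s ^ ρ s ≤ ℓ + 1 ∧ G ℓ = s ^ ℓ / ((exp 1 * ρ₀) ^ (1 / ρ₀)) ^ ℓ := by
  -- for `ℓ = 0` every radius fits `G 0 = 1`; `φ 1` is taken so that `s ^ ρ s ≤ ℓ + 1` still holds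
  rcases Nat.eq_zero_or_pos ℓ with rfl | hℓ
  · exact ⟨φ 1, hφpos 1 one_pos, by simp [hφ 1 one_pos], by simp [hG0]⟩
  · have hℓ' : (0 : ℝ) < ℓ := Nat.cast_pos.2 hℓ
    refine ⟨φ ℓ, hφpos ℓ hℓ', by linarith [hφ ℓ hℓ'], ?_⟩
    rw [hG ℓ hℓ, ← rpow_natCast ((exp 1 * ρ₀) ^ (1 / ρ₀)), ← rpow_mul (by positivity),
      one_div_mul_eq_div]

lemma norm_mul_iteratedDeriv_le {ρ₁ ρ₂ : ℝ → ℝ}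
    (hmono₁ : StrictMonoOn (fun r => r ^ ρ₁ r) (Ioi 0)) (hle : ∀ r, 0 ≤ r → ρ₁ r ≤ ρ₂ r)
    {K B : ℝ} (hK : 0 ≤ K) (hB : ∀ r s, 0 ≤ r → 0 ≤ s →
      (r + s) ^ ρ₁ (r + s) ≤ K * (r ^ ρ₁ r + s ^ ρ₁ s) + B)
    {f : ℂ → ℂ} (hf : Differentiable ℂ f) {τ M : ℝ} (hτ : 0 ≤ τ) (hM : 0 ≤ M)
    (hfM : ∀ z, ‖f z‖ ≤ M * exp (τ * ‖z‖ ^ ρ₁ ‖z‖)) {ℓ : ℕ} {s : ℝ} (hs : 0 < s)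
    (hsℓ : s ^ ρ₁ s ≤ ℓ + 1) {z a : ℂ} {C q ε σ : ℝ} (hC : 0 ≤ C) (hq : 0 ≤ q)
    (hε : 0 ≤ ε)
    (ha : ‖a‖ ≤ C * (s ^ ℓ / q ^ ℓ / ℓ.factorial) * ε ^ ℓ * exp (σ * ‖z‖ ^ ρ₂ ‖z‖)) :
    ‖a * iteratedDeriv ℓ f z‖ ≤ C * M * exp (τ * (2 * K + B + 1))
      * exp ((σ + K * τ) * ‖z‖ ^ ρ₂ ‖z‖) * (ε / q * exp (K * τ)) ^ ℓ := by
  have hW := hB _ _ (norm_nonneg z) hs.le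
  have hW₁₂ := rpow_le_rpow_add_one_of_le hmono₁ hle (norm_nonneg z)
  calc ‖a * iteratedDeriv ℓ f z‖
      ≤ C * (M * exp (τ * ((‖z‖ + s) ^ ρ₁ (‖z‖ + s) + 1))) * (ε / q) ^ ℓ
          * exp (σ * ‖z‖ ^ ρ₂ ‖z‖) :=
        norm_mul_le_of_coeff_bound_of_cauchy_bound hs ha
          (norm_iteratedDeriv_le_of_norm_le_exp hmono₁ hf hτ hM hfM z hs ℓ)
    _ ≤ C * (M * exp (K * τ * ‖z‖ ^ ρ₂ ‖z‖ + τ * (2 * K + B + 1) + ℓ * (K * τ))) * (ε / q) ^ ℓ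
          * exp (σ * ‖z‖ ^ ρ₂ ‖z‖) := by
        gcongr
        linarith [mul_le_mul_of_nonneg_left hW hτ,
          mul_le_mul_of_nonneg_left (add_le_add hW₁₂ hsℓ) (by positivity : 0 ≤ K * τ)]
    _ = C * M * exp (τ * (2 * K + B + 1)) * exp ((σ + K * τ) * ‖z‖ ^ ρ₂ ‖z‖)
          * (ε / q * exp (K * τ)) ^ ℓ := by
        rw [add_mul, exp_add, exp_add, exp_add, exp_nat_mul, mul_pow]
        ring

lemma summable_and_norm_tsum_le_of_norm_le_geometric_two {E : Type*} [NormedAddCommGroup E]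
    [CompleteSpace E] {a : ℕ → E} {A : ℝ} (h : ∀ ℓ, ‖a ℓ‖ ≤ A * (1 / 2) ^ ℓ) :
    Summable a ∧ ‖∑' ℓ, a ℓ‖ ≤ 2 * A := by
  have hg : HasSum (fun ℓ : ℕ => A * (1 / 2) ^ ℓ) (2 * A) := by
    simpa [mul_comm] using hasSum_geometric_two.mul_left A
  exact ⟨.of_norm_bounded hg.summable h, tsum_of_norm_bounded hg h⟩

theorem stmt_18_general (ρ₁ ρ₂ : ℝ → ℝ) (ρ₁₀ : ℝ) (hρ₁₀ : 0 < ρ₁₀)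
    (hdiff₁ : Differentiable ℝ ρ₁)
    (hlim₁ : Filter.Tendsto ρ₁ Filter.atTop (nhds ρ₁₀))
    (hder₁ : Filter.Tendsto (fun r => deriv ρ₁ r * r * Real.log r) Filter.atTop (nhds 0))
    (hmono₁ : StrictMonoOn (fun r => r ^ ρ₁ r) (Set.Ioi (0:ℝ)))
    (hle : ∀ r, 0 ≤ r → ρ₁ r ≤ ρ₂ r)
    (φ₁ : ℝ → ℝ) (hφ₁pos : ∀ t, 0 < t → 0 < φ₁ t)
    (hφ₁p : ∀ t, 0 < t → (φ₁ t) ^ ρ₁ (φ₁ t) = t)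
    (G₁ : ℕ → ℝ) (hG₁0 : G₁ 0 = 1)
    (hG₁ : ∀ ℓ : ℕ, 0 < ℓ → G₁ ℓ = φ₁ (ℓ : ℝ) ^ ℓ / (Real.exp 1 * ρ₁₀) ^ ((ℓ : ℝ) / ρ₁₀))
    (u : ℕ → ℂ → ℂ)
    (hu : ∀ ε > (0:ℝ), ∃ (σ : ℝ) (C : ℝ), 0 < σ ∧ 0 < C ∧ ∀ ℓ : ℕ, ∀ z : ℂ,
      ‖u ℓ z‖ ≤
        C * (G₁ ℓ / (ℓ.factorial : ℝ)) * ε ^ ℓ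
          * Real.exp (σ * ‖z‖ ^ ρ₂ (‖z‖))) :
    ∀ τ > (0:ℝ), ∃ (σ : ℝ) (C : ℝ), 0 < σ ∧ 0 < C ∧
      ∀ f : ℂ → ℂ, Differentiable ℂ f → ∀ M : ℝ, 0 ≤ M →
        (∀ z : ℂ, ‖f z‖ ≤ M * Real.exp (τ * ‖z‖ ^ ρ₁ (‖z‖))) →
        (∀ z : ℂ, Summable (fun ℓ : ℕ => u ℓ z * iteratedDeriv ℓ f z)) ∧
        ∀ z : ℂ, ‖∑' ℓ : ℕ, u ℓ z * iteratedDeriv ℓ f z‖ ≤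
          C * M * Real.exp ((σ + (2:ℝ) ^ (ρ₁₀ + 1) * τ)
            * ‖z‖ ^ ρ₂ (‖z‖)) := by
  intro τ hτ
  obtain ⟨B, hB⟩ := exists_rpow_add_le hmono₁ hdiff₁ hlim₁ hder₁ one_pos
  set K : ℝ := 2 ^ (ρ₁₀ + 1)
  set q : ℝ := (exp 1 * ρ₁₀) ^ (1 / ρ₁₀)
  set ε : ℝ := q / (2 * exp (K * τ))
  have hq : 0 < q := by positivity
  have hε : ε / q * exp (K * τ) = 1 / 2 := by
    simp only [ε]
    field_simp
  obtain ⟨σ₀, C₀, hσ₀, hC₀, hu₀⟩ := hu ε (by positivity)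
  refine ⟨σ₀, 2 * C₀ * exp (τ * (2 * K + B + 1)), hσ₀, by positivity,
    fun f hf M hM hfM => ?_⟩
  have hterm (z : ℂ) (ℓ : ℕ) : ‖u ℓ z * iteratedDeriv ℓ f z‖
      ≤ C₀ * M * exp (τ * (2 * K + B + 1)) * exp ((σ₀ + K * τ) * ‖z‖ ^ ρ₂ ‖z‖) * (1 / 2) ^ ℓ := by
    obtain ⟨s, hs, hsℓ, hG⟩ := exists_pos_rpow_le_and_eq_div_pow hρ₁₀ hφ₁pos hφ₁p hG₁0 hG₁ ℓ
    rw [← hε]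
    exact norm_mul_iteratedDeriv_le hmono₁ hle (by positivity) hB hf hτ.le hM hfM hs hsℓ hC₀.le
      hq.le (by positivity) (hG ▸ hu₀ ℓ z)
  have hsum z := summable_and_norm_tsum_le_of_norm_le_geometric_two (hterm z)
  exact ⟨fun z => (hsum z).1, fun z => (hsum z).2.trans_eq (by ring)⟩

/-- Step 1 of Theorem 4.4 (complex-scalar version): an infinite order differential
operator with coefficients satisfying the G-estimates acts continuously between
the spaces of entire functions of proximate orders ρ₁ and ρ₂. -/
theorem stmt_18 (ρ₁ ρ₂ : ℝ → ℝ) (ρ₁₀ ρ₂₀ : ℝ) (hρ₁₀ : 0 < ρ₁₀) (hρ₂₀ : 0 < ρ₂₀)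
    (hdiff₁ : Differentiable ℝ ρ₁) (hdiff₂ : Differentiable ℝ ρ₂)
    (hpos₁ : ∀ r, 0 ≤ r → 0 ≤ ρ₁ r) (hpos₂ : ∀ r, 0 ≤ r → 0 ≤ ρ₂ r)
    (hlim₁ : Filter.Tendsto ρ₁ Filter.atTop (nhds ρ₁₀))
    (hlim₂ : Filter.Tendsto ρ₂ Filter.atTop (nhds ρ₂₀))
    (hder₁ : Filter.Tendsto (fun r => deriv ρ₁ r * r * Real.log r) Filter.atTop (nhds 0))
    (hder₂ : Filter.Tendsto (fun r => deriv ρ₂ r * r * Real.log r) Filter.atTop (nhds 0))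
    (hmono₁ : StrictMonoOn (fun r => r ^ ρ₁ r) (Set.Ioi (0:ℝ)))
    (hmono₂ : StrictMonoOn (fun r => r ^ ρ₂ r) (Set.Ioi (0:ℝ)))
    (hzero₁ : Filter.Tendsto (fun r => r ^ ρ₁ r) (nhdsWithin 0 (Set.Ioi 0)) (nhds 0))
    (hzero₂ : Filter.Tendsto (fun r => r ^ ρ₂ r) (nhdsWithin 0 (Set.Ioi 0)) (nhds 0))
    (hO : ∃ (K : ℝ) (r₀ : ℝ), 0 < K ∧ ∀ r ≥ r₀, r ^ ρ₁ r ≤ K * r ^ ρ₂ r)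
    (hle : ∀ r, 0 ≤ r → ρ₁ r ≤ ρ₂ r)
    (φ₁ : ℝ → ℝ) (hφ₁pos : ∀ t, 0 < t → 0 < φ₁ t)
    (hφ₁ : ∀ r, 0 < r → φ₁ (r ^ ρ₁ r) = r)
    (hφ₁p : ∀ t, 0 < t → (φ₁ t) ^ ρ₁ (φ₁ t) = t)
    (G₁ : ℕ → ℝ) (hG₁0 : G₁ 0 = 1)
    (hG₁ : ∀ ℓ : ℕ, 0 < ℓ → G₁ ℓ = φ₁ (ℓ : ℝ) ^ ℓ / (Real.exp 1 * ρ₁₀) ^ ((ℓ : ℝ) / ρ₁₀))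
    (u : ℕ → ℂ → ℂ) (huhol : ∀ ℓ, Differentiable ℂ (u ℓ))
    (hu : ∀ ε > (0:ℝ), ∃ (σ : ℝ) (C : ℝ), 0 < σ ∧ 0 < C ∧ ∀ ℓ : ℕ, ∀ z : ℂ,
      ‖u ℓ z‖ ≤
        C * (G₁ ℓ / (ℓ.factorial : ℝ)) * ε ^ ℓ
          * Real.exp (σ * ‖z‖ ^ ρ₂ (‖z‖))) :
    ∀ τ > (0:ℝ), ∃ (σ : ℝ) (C : ℝ), 0 < σ ∧ 0 < C ∧
      ∀ f : ℂ → ℂ, Differentiable ℂ f → ∀ M : ℝ, 0 ≤ M →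
        (∀ z : ℂ, ‖f z‖ ≤ M * Real.exp (τ * ‖z‖ ^ ρ₁ (‖z‖))) →
        (∀ z : ℂ, Summable (fun ℓ : ℕ => u ℓ z * iteratedDeriv ℓ f z)) ∧
        ∀ z : ℂ, ‖∑' ℓ : ℕ, u ℓ z * iteratedDeriv ℓ f z‖ ≤
          C * M * Real.exp ((σ + (2:ℝ) ^ (ρ₁₀ + 1) * τ)
            * ‖z‖ ^ ρ₂ (‖z‖)) :=
  stmt_18_general ρ₁ ρ₂ ρ₁₀ hρ₁₀ hdiff₁ hlim₁ hder₁ hmono₁ hle φ₁ hφ₁pos hφ₁p G₁ hG₁0 hG₁ u hu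
end
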